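/- arXiv:2312.08390 — 9 statements merged into one kernel-verified Lean document; each statement's English description precedes it below -/
import Mathlib

section
/- Let D = {(a,b) ∈ ℤ×ℤ : b ≠ a and b ≠ a+1}. Call a function f : D → ℤ a grading function if there exists an integer m such that f(a,b) = sgn(b−a)·(−1)^(a+b)·m for all (a,b) ∈ D. Then f : D → ℤ is a grading function if and only if both of the following hold: (1) f(a,b) = −f(b,a) for all (a,b) ∈ D with |a−b| > 1, and (2) f(a,b) = f(b,a+1) for all (a,b) ∈ D. -/
/-- `f : ℤ × ℤ → ℤ` (considered on the domain `D = {(a,b) | b ≠ a, b ≠ a+1}`) is a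
*grading function* if there exists an integer `m` such that
`f a b = sgn (b - a) * (-1)^(a+b) * m` for all `(a, b) ∈ D`. -/
def IsGradingFunction (f : ℤ → ℤ → ℤ) : Prop :=
  ∃ m : ℤ, ∀ a b : ℤ, b ≠ a → b ≠ a + 1 →
    f a b = (b - a).sign * (-1 : ℤ) ^ (a + b).natAbs * m

/-!
Both relations are linear in `f`, and the grading sign `sgn (b - a) * (-1)^(a+b)` satisfies
them, so it suffices to show that a solution vanishing at `(0, 2)` vanishes on all of `D`.
Applying (2) twice shows that a solution is invariant under translation, `f a b = f 0 (b - a)`.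
In terms of `φ d = f 0 d`, relation (2) reads `φ (1 - d) = φ d` and (1) reads `φ (-d) = -φ d`;
together they give `φ (d + 1) = -φ d` for `d ≥ 2`, so `φ` vanishes on `d ≥ 2` and then,
by `φ (1 - d) = φ d`, everywhere on `D`.
-/

lemma Int.sign_one_sub {d : ℤ} (hd0 : d ≠ 0) (hd1 : d ≠ 1) : (1 - d).sign = -d.sign := by
  rcases le_or_gt 2 d with hd | hd
  · rw [Int.sign_eq_neg_one_of_neg (by omega), Int.sign_eq_one_of_pos (by omega)]
  · rw [Int.sign_eq_one_of_pos (by omega), Int.sign_eq_neg_one_of_neg (by omega), neg_neg]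

lemma Int.neg_one_pow_natAbs_add_one (n : ℤ) :
    (-1 : ℤ) ^ (n + 1).natAbs = -(-1) ^ n.natAbs := by
  rw [← Int.coe_negOnePow, ← Int.coe_negOnePow, Int.negOnePow_succ, Units.val_neg, Int.cast_neg]

def gradingSign (a b : ℤ) : ℤ := (b - a).sign * (-1) ^ (a + b).natAbs

lemma gradingSign_swap (a b : ℤ) : gradingSign b a = -gradingSign a b := by
  rw [gradingSign, gradingSign, ← neg_sub, Int.sign_neg, add_comm, neg_mul]

lemma gradingSign_rotate {a b : ℤ} (hba : b ≠ a) (hba1 : b ≠ a + 1) :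
    gradingSign b (a + 1) = gradingSign a b := by
  rw [gradingSign, gradingSign, show a + 1 - b = 1 - (b - a) by ring,
    Int.sign_one_sub (sub_ne_zero.mpr hba) (by omega), show b + (a + 1) = a + b + 1 by ring,
    Int.neg_one_pow_natAbs_add_one]
  ring

lemma isGradingFunction_iff_exists_gradingSign (f : ℤ → ℤ → ℤ) :
    IsGradingFunction f ↔
      ∃ m : ℤ, ∀ a b : ℤ, b ≠ a → b ≠ a + 1 → f a b = gradingSign a b * m :=
  Iff.rfl

structure GradingRelations (f : ℤ → ℤ → ℤ) : Prop where
  antisymm : ∀ a b : ℤ, b ≠ a → b ≠ a + 1 → 1 < |a - b| → f a b = - f b a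
  rotate : ∀ a b : ℤ, b ≠ a → b ≠ a + 1 → f a b = f b (a + 1)

namespace GradingRelations

variable {f : ℤ → ℤ → ℤ} (hf : GradingRelations f)
include hf

lemma sub_gradingSign_mul (m : ℤ) :
    GradingRelations fun a b => f a b - gradingSign a b * m where
  antisymm a b hba hba1 hab := by
    rw [hf.antisymm a b hba hba1 hab, gradingSign_swap]
    ring
  rotate a b hba hba1 := by
    rw [hf.rotate a b hba hba1, gradingSign_rotate hba hba1]

lemma map_add_one_add_one {a b : ℤ} (hba : b ≠ a) (hba1 : b ≠ a + 1) :
    f (a + 1) (b + 1) = f a b := by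
  rw [hf.rotate a b hba hba1, hf.rotate b (a + 1) (by omega) (by omega)]

lemma map_eq_map_zero_sub {a b : ℤ} (hba : b ≠ a) (hba1 : b ≠ a + 1) :
    f a b = f 0 (b - a) := by
  have hper : Function.Periodic (fun n : ℤ => f (a + n) (b + n)) 1 := fun n => by
    simpa only [add_assoc] using hf.map_add_one_add_one (a := a + n) (b := b + n) (by omega)
      (by omega)
  simpa [sub_eq_add_neg] using (hper.int_mul (-a) 0).symm

lemma map_zero_one_sub {d : ℤ} (hd0 : d ≠ 0) (hd1 : d ≠ 1) : f 0 (1 - d) = f 0 d := by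
  rw [hf.rotate 0 d hd0 (by omega), zero_add,
    hf.map_eq_map_zero_sub (a := d) (b := 1) (by omega) (by omega)]

lemma map_zero_neg {d : ℤ} (hd : 2 ≤ d) : f 0 (-d) = -f 0 d := by
  rw [hf.antisymm 0 d (by omega) (by omega) (lt_abs.mpr (Or.inr (by omega))), neg_neg,
    hf.map_eq_map_zero_sub (a := d) (b := 0) (by omega) (by omega), zero_sub]

lemma map_zero_add_one {d : ℤ} (hd : 2 ≤ d) : f 0 (d + 1) = -f 0 d := by
  rw [← hf.map_zero_one_sub (by omega) (by omega), show 1 - (d + 1) = -d by ring, hf.map_zero_neg hd]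

lemma eq_zero_of_map_zero_two (h2 : f 0 2 = 0) {a b : ℤ} (hba : b ≠ a) (hba1 : b ≠ a + 1) :
    f a b = 0 := by
  have hpos : ∀ d, 2 ≤ d → f 0 d = 0 := fun d hd => by
    induction d, hd using Int.leInduction with
    | base => exact h2
    | succ d hd ih => rw [hf.map_zero_add_one hd, ih, neg_zero]
  rw [hf.map_eq_map_zero_sub hba hba1]
  rcases le_or_gt 2 (b - a) with hd | hd
  · exact hpos _ hd
  · rw [← hf.map_zero_one_sub (by omega) (by omega)]
    exact hpos _ (by omega)

end GradingRelations

/-- A map `f` on `D = {(a,b) | b ≠ a, b ≠ a+1}` is a grading function if and only if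
(1) `f a b = - f b a` whenever `|a - b| > 1`, and (2) `f a b = f b (a+1)` on all of `D`. -/
theorem isGradingFunction_iff (f : ℤ → ℤ → ℤ) :
    IsGradingFunction f ↔
      ((∀ a b : ℤ, b ≠ a → b ≠ a + 1 → 1 < |a - b| → f a b = - f b a) ∧
       (∀ a b : ℤ, b ≠ a → b ≠ a + 1 → f a b = f b (a + 1))) := by
  rw [isGradingFunction_iff_exists_gradingSign]
  constructor
  · rintro ⟨m, hm⟩
    refine ⟨fun a b hba hba1 hab => ?_, fun a b hba hba1 => ?_⟩
    · have hab1 : a ≠ b + 1 := by rcases lt_abs.mp hab with h | h <;> omega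
      rw [hm a b hba hba1, hm b a hba.symm hab1, gradingSign_swap, neg_mul]
    · rw [hm a b hba hba1, hm b (a + 1) (by omega) (by omega), gradingSign_rotate hba hba1]
  · rintro ⟨hanti, hrot⟩
    refine ⟨f 0 2, fun a b hba hba1 => sub_eq_zero.mp ?_⟩
    have hg := (GradingRelations.mk hanti hrot).sub_gradingSign_mul (f 0 2)
    exact hg.eq_zero_of_map_zero_two (by simp [gradingSign, Int.sign_eq_one_of_pos]) hba hba1
end

section
/- The map sending a cup diagram with exactly n cups to the set of right endpoints of its cups is a bijection from Λ_n onto the set of n-element subsets of ℤ+1/2. In particular, for every n-element subset S of ℤ+1/2 there is exactly one cup diagram with n cups whose set of right endpoints of cups equals S. -/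
/-- A rational number is a *half-integer*, i.e. of the form `k + 1/2` for an integer `k`. -/
def IsHalfInt (q : ℚ) : Prop := ∃ k : ℤ, q = (k : ℚ) + 1/2

/-- A *cup diagram* (the same notion is also used for cap diagrams): a finite set of
arcs `(a, b)` of half-integers with `a < b` (the *left* and *right endpoints*), such that
all endpoints of all arcs are pairwise distinct, and every half-integer strictly between
the endpoints of an arc is an endpoint of an arc nested inside it. -/
structure ArcDiagram where
  arcs : Finset (ℚ × ℚ)
  half_left : ∀ c ∈ arcs, IsHalfInt c.1
  half_right : ∀ c ∈ arcs, IsHalfInt c.2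
  lt : ∀ c ∈ arcs, c.1 < c.2
  distinct : ∀ c ∈ arcs, ∀ c' ∈ arcs, c ≠ c' →
    c.1 ≠ c'.1 ∧ c.1 ≠ c'.2 ∧ c.2 ≠ c'.1 ∧ c.2 ≠ c'.2
  nested : ∀ c ∈ arcs, ∀ x : ℚ, IsHalfInt x → c.1 < x → x < c.2 →
    ∃ c' ∈ arcs, (x = c'.1 ∨ x = c'.2) ∧ c.1 ≤ c'.1 ∧ c'.2 ≤ c.2

namespace CupAux

theorem diagram_ext {D E : ArcDiagram} (h : D.arcs = E.arcs) : D = E := by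
  cases D; cases E; cases h; rfl

lemma half_add {x : ℚ} (h : IsHalfInt x) (m : ℤ) : IsHalfInt (x + m) := by
  obtain ⟨k, rfl⟩ := h; exact ⟨k + m, by push_cast; ring⟩

lemma half_gap {x y : ℚ} (hx : IsHalfInt x) (hy : IsHalfInt y) (h : x < y) : x + 1 ≤ y := by
  obtain ⟨k, rfl⟩ := hx; obtain ⟨m, rfl⟩ := hy
  have hk : k < m := by exact_mod_cast (by linarith : (k : ℚ) < m)
  have : (k : ℚ) + 1 ≤ m := by exact_mod_cast hk
  linarith

/-- expansion map: makes room for a cup at `(b-1, b)` -/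
def g (b x : ℚ) : ℚ := if x < b - 1 then x else x + 2

/-- contraction map, inverse of `g` on the complement of `{b-1, b}` -/
def p (b x : ℚ) : ℚ := if x < b - 1 then x else x - 2

/-- being outside the "new cup" positions -/
def Dom (b x : ℚ) : Prop := x < b - 1 ∨ b < x

lemma g_strictMono (b : ℚ) : StrictMono (g b) := by
  intro x y h
  unfold g; split_ifs <;> linarith

lemma g_mono (b : ℚ) : Monotone (g b) := (g_strictMono b).monotone

lemma p_g (b x : ℚ) : p b (g b x) = x := by
  unfold g p; split_ifs <;> first | rfl | linarith | ring

lemma g_half {b x : ℚ} (h : IsHalfInt x) : IsHalfInt (g b x) := by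
  unfold g; split_ifs
  · exact h
  · exact_mod_cast half_add h 2

lemma p_half {b x : ℚ} (h : IsHalfInt x) : IsHalfInt (p b x) := by
  unfold p; split_ifs
  · exact h
  · have := half_add h (-2); simpa [sub_eq_add_neg] using this

lemma g_dom (b x : ℚ) : Dom b (g b x) := by
  unfold g Dom; split_ifs with h
  · exact Or.inl h
  · right; linarith

lemma g_ne_left (b x : ℚ) : g b x ≠ b - 1 := by
  rcases g_dom b x with h | h <;> intro e <;> rw [e] at h <;> linarith

lemma g_ne_right (b x : ℚ) : g b x ≠ b := by
  rcases g_dom b x with h | h <;> intro e <;> rw [e] at h <;> linarith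

lemma g_p {b x : ℚ} (hb : IsHalfInt b) (hx : IsHalfInt x) (hd : Dom b x) :
    g b (p b x) = x := by
  unfold p g
  rcases hd with h | h
  · rw [if_pos h, if_pos h]
  · have h1 : b + 1 ≤ x := half_gap hb hx h
    have h2 : ¬ x < b - 1 := by linarith
    have h3 : ¬ x - 2 < b - 1 := by linarith
    rw [if_neg h2, if_neg h3]
    ring

lemma dom_of_ne {b x : ℚ} (hb : IsHalfInt b) (hx : IsHalfInt x)
    (h1 : x ≠ b - 1) (h2 : x ≠ b) : Dom b x := by
  rcases lt_trichotomy x b with h | h | h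
  · left
    rcases lt_or_ge x (b - 1) with h' | h'
    · exact h'
    · exfalso
      have hb1 : IsHalfInt (b - 1) := by
        have := half_add hb (-1); simpa [sub_eq_add_neg] using this
      have h3 : b - 1 < x := lt_of_le_of_ne h' (Ne.symm h1)
      have := half_gap hb1 hx h3
      linarith
  · exact absurd h h2
  · exact Or.inr h

lemma g_lt_iff {b x y : ℚ} : g b x < g b y ↔ x < y := by
  constructor
  · intro h
    by_contra h'
    exact absurd (g_mono b (not_lt.mp h')) (not_le.mpr h)
  · exact fun h => g_strictMono b h

lemma p_lt_of_lt {b x y : ℚ} (hb : IsHalfInt b) (hx : IsHalfInt x) (hy : IsHalfInt y)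
    (dx : Dom b x) (dy : Dom b y) (h : x < y) : p b x < p b y := by
  rw [← g_lt_iff (b := b)]
  rwa [g_p hb hx dx, g_p hb hy dy]

lemma p_le_of_le {b x y : ℚ} (hb : IsHalfInt b) (hx : IsHalfInt x) (hy : IsHalfInt y)
    (dx : Dom b x) (dy : Dom b y) (h : x ≤ y) : p b x ≤ p b y := by
  rcases eq_or_lt_of_le h with rfl | h'
  · exact le_rfl
  · exact le_of_lt (p_lt_of_lt hb hx hy dx dy h')

lemma no_half_between {b x : ℚ} (hb : IsHalfInt b) (hx : IsHalfInt x)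
    (h1 : b - 1 < x) (h2 : x < b) : False := by
  have hb1 : IsHalfInt (b - 1) := by
    have := half_add hb (-1); simpa [sub_eq_add_neg] using this
  have := half_gap hb1 hx h1
  linarith

end CupAux

namespace CupAux

/-- Insert a minimal cup `(b-1, b)` into a diagram, after shifting everything
in `[b-1, ∞)` up by `2` to make room. -/
def insertD (b : ℚ) (hb : IsHalfInt b) (E : ArcDiagram) : ArcDiagram where
  arcs := insert (b - 1, b) (E.arcs.image (Prod.map (g b) (g b)))
  half_left := by
    intro c hc
    rcases Finset.mem_insert.mp hc with rfl | hc
    · have := half_add hb (-1); simpa [sub_eq_add_neg] using this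
    · obtain ⟨c', hc', rfl⟩ := Finset.mem_image.mp hc
      exact g_half (E.half_left c' hc')
  half_right := by
    intro c hc
    rcases Finset.mem_insert.mp hc with rfl | hc
    · exact hb
    · obtain ⟨c', hc', rfl⟩ := Finset.mem_image.mp hc
      exact g_half (E.half_right c' hc')
  lt := by
    intro c hc
    rcases Finset.mem_insert.mp hc with rfl | hc
    · show b - 1 < b; linarith
    · obtain ⟨c', hc', rfl⟩ := Finset.mem_image.mp hc
      exact g_strictMono b (E.lt c' hc')
  distinct := by
    have key : ∀ c ∈ E.arcs.image (Prod.map (g b) (g b)),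
        c.1 ≠ b - 1 ∧ c.1 ≠ b ∧ c.2 ≠ b - 1 ∧ c.2 ≠ b := by
      intro c hc
      obtain ⟨c', hc', rfl⟩ := Finset.mem_image.mp hc
      exact ⟨g_ne_left b c'.1, g_ne_right b c'.1, g_ne_left b c'.2, g_ne_right b c'.2⟩
    intro c hc c' hc' hne
    rcases Finset.mem_insert.mp hc with rfl | hc <;>
      rcases Finset.mem_insert.mp hc' with h' | hc'
    · exact absurd h'.symm hne
    · obtain ⟨k1, k2, k3, k4⟩ := key c' hc'
      exact ⟨k1.symm, k3.symm, k2.symm, k4.symm⟩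
    · subst h'
      obtain ⟨k1, k2, k3, k4⟩ := key c hc
      exact ⟨k1, k2, k3, k4⟩
    · obtain ⟨d, hd, rfl⟩ := Finset.mem_image.mp hc
      obtain ⟨d', hd', rfl⟩ := Finset.mem_image.mp hc'
      have hdd : d ≠ d' := by rintro rfl; exact hne rfl
      obtain ⟨k1, k2, k3, k4⟩ := E.distinct d hd d' hd' hdd
      have inj := (g_strictMono b).injective
      exact ⟨fun h => k1 (inj h), fun h => k2 (inj h),
             fun h => k3 (inj h), fun h => k4 (inj h)⟩
  nested := by
    intro c hc x hx h1 h2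
    rcases Finset.mem_insert.mp hc with rfl | hc
    · exact (no_half_between hb hx h1 h2).elim
    · obtain ⟨c', hc', rfl⟩ := Finset.mem_image.mp hc
      simp only [Prod.map] at h1 h2 ⊢
      by_cases hxd : x = b - 1 ∨ x = b
      · -- witness is the new cup (b-1, b)
        refine ⟨(b - 1, b), Finset.mem_insert_self _ _, hxd, ?_, ?_⟩
        · show g b c'.1 ≤ b - 1
          rcases g_dom b c'.1 with h | h
          · linarith
          · exfalso; rcases hxd with rfl | rfl <;> linarith
        · show b ≤ g b c'.2
          rcases g_dom b c'.2 with h | h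
          · exfalso; rcases hxd with rfl | rfl <;> linarith
          · linarith
      · push_neg at hxd
        have hdx : Dom b x := dom_of_ne hb hx hxd.1 hxd.2
        have hgp : g b (p b x) = x := g_p hb hx hdx
        have hpx : IsHalfInt (p b x) := p_half hx
        have l1 : c'.1 < p b x := by rw [← g_lt_iff (b := b), hgp]; exact h1
        have l2 : p b x < c'.2 := by rw [← g_lt_iff (b := b), hgp]; exact h2
        obtain ⟨d, hd, hde, hn1, hn2⟩ := E.nested c' hc' (p b x) hpx l1 l2
        refine ⟨Prod.map (g b) (g b) d,
          Finset.mem_insert_of_mem (Finset.mem_image_of_mem _ hd), ?_, ?_, ?_⟩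
        · rcases hde with h | h
          · left; simp [Prod.map, ← h, hgp]
          · right; simp [Prod.map, ← h, hgp]
        · exact g_mono b hn1
        · exact g_mono b hn2

lemma insertD_card (b : ℚ) (hb : IsHalfInt b) (E : ArcDiagram) :
    (insertD b hb E).arcs.card = E.arcs.card + 1 := by
  have hnot : (b - 1, b) ∉ E.arcs.image (Prod.map (g b) (g b)) := by
    intro h
    obtain ⟨c', _, he⟩ := Finset.mem_image.mp h
    exact g_ne_right b c'.2 (congrArg Prod.snd he)
  have hinj : Set.InjOn (Prod.map (g b) (g b)) ↑E.arcs := by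
    intro u _ v _ h
    have inj := (g_strictMono b).injective
    exact Prod.ext (inj (congrArg Prod.fst h)) (inj (congrArg Prod.snd h))
  unfold insertD
  rw [Finset.card_insert_of_notMem hnot, Finset.card_image_of_injOn hinj]

lemma insertD_rightset (b : ℚ) (hb : IsHalfInt b) (E : ArcDiagram) :
    (insertD b hb E).arcs.image Prod.snd
      = insert b ((E.arcs.image Prod.snd).image (g b)) := by
  unfold insertD
  rw [Finset.image_insert, Finset.image_image]
  congr 1
  ext y
  simp only [Finset.mem_image, Function.comp, Prod.map, Prod.exists, Finset.mem_image]
  constructor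
  · rintro ⟨a, b', h, rfl⟩; exact ⟨b', ⟨a, b', h, rfl⟩, rfl⟩
  · rintro ⟨v, ⟨a, w, h, rfl⟩, rfl⟩; exact ⟨a, w, h, rfl⟩

end CupAux

namespace CupAux

/-- The cup whose right endpoint is the minimum of the right endpoints must be `(b-1, b)`. -/
lemma min_cup_mem (D : ArcDiagram) (b : ℚ) (hb : IsHalfInt b)
    (hbmem : b ∈ D.arcs.image Prod.snd)
    (hmin : ∀ s ∈ D.arcs.image Prod.snd, b ≤ s) :
    (b - 1, b) ∈ D.arcs := by
  obtain ⟨c₀, hc₀, hc₀2⟩ := Finset.mem_image.mp hbmem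
  have h1 : IsHalfInt c₀.1 := D.half_left c₀ hc₀
  have hlt : c₀.1 < b := hc₀2 ▸ D.lt c₀ hc₀
  have hle : c₀.1 + 1 ≤ b := half_gap h1 hb hlt
  rcases eq_or_lt_of_le hle with heq | hlt'
  · have : c₀ = (b - 1, b) := by
      have : c₀.1 = b - 1 := by linarith
      exact Prod.ext this hc₀2
    rwa [← this]
  · exfalso
    set x := c₀.1 + 1 with hx
    have hxh : IsHalfInt x := by
      have := half_add h1 1; simpa using this
    obtain ⟨c', hc', hend, hn1, hn2⟩ :=
      D.nested c₀ hc₀ x hxh (by simp [hx]) (by rw [hc₀2]; linarith)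
    have hc'2S : c'.2 ∈ D.arcs.image Prod.snd := Finset.mem_image_of_mem _ hc'
    have hble : b ≤ c'.2 := hmin _ hc'2S
    have hc'2b : c'.2 = b := le_antisymm (hc₀2 ▸ hn2) hble
    have hcc : c' = c₀ := by
      by_contra hne
      exact (D.distinct c' hc' c₀ hc₀ hne).2.2.2 (hc'2b.trans hc₀2.symm)
    rcases hend with h | h
    · rw [hcc] at h; linarith [hx ▸ h]
    · rw [hcc, hc₀2] at h; linarith

/-- Endpoints of any other arc avoid `{b-1, b}`. -/
lemma dom_arc {b : ℚ} (hb : IsHalfInt b) (D : ArcDiagram)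
    (hmem : (b - 1, b) ∈ D.arcs) (c : ℚ × ℚ) (hc : c ∈ D.arcs)
    (hne : c ≠ (b - 1, b)) : Dom b c.1 ∧ Dom b c.2 := by
  obtain ⟨k1, k2, k3, k4⟩ := D.distinct c hc (b - 1, b) hmem hne
  exact ⟨dom_of_ne hb (D.half_left c hc) k1 k2,
         dom_of_ne hb (D.half_right c hc) k3 k4⟩

/-- Remove the cup `(b-1, b)` and contract the hole by shifting everything
above `b` down by `2`. -/
def contractD (b : ℚ) (hb : IsHalfInt b) (D : ArcDiagram)
    (hmem : (b - 1, b) ∈ D.arcs) : ArcDiagram where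
  arcs := (D.arcs.erase (b - 1, b)).image (Prod.map (p b) (p b))
  half_left := by
    intro c hc
    obtain ⟨c', hc', rfl⟩ := Finset.mem_image.mp hc
    exact p_half (D.half_left c' (Finset.mem_of_mem_erase hc'))
  half_right := by
    intro c hc
    obtain ⟨c', hc', rfl⟩ := Finset.mem_image.mp hc
    exact p_half (D.half_right c' (Finset.mem_of_mem_erase hc'))
  lt := by
    intro c hc
    obtain ⟨c', hc', rfl⟩ := Finset.mem_image.mp hc
    have hm := Finset.mem_of_mem_erase hc'
    have hne := Finset.ne_of_mem_erase hc'
    obtain ⟨d1, d2⟩ := dom_arc hb D hmem c' hm hne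
    exact p_lt_of_lt hb (D.half_left c' hm) (D.half_right c' hm) d1 d2 (D.lt c' hm)
  distinct := by
    intro c hc c' hc' hne
    obtain ⟨d, hd, rfl⟩ := Finset.mem_image.mp hc
    obtain ⟨d', hd', rfl⟩ := Finset.mem_image.mp hc'
    have hmd := Finset.mem_of_mem_erase hd
    have hmd' := Finset.mem_of_mem_erase hd'
    obtain ⟨e1, e2⟩ := dom_arc hb D hmem d hmd (Finset.ne_of_mem_erase hd)
    obtain ⟨e1', e2'⟩ := dom_arc hb D hmem d' hmd' (Finset.ne_of_mem_erase hd')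
    have hdd : d ≠ d' := by rintro rfl; exact hne rfl
    obtain ⟨k1, k2, k3, k4⟩ := D.distinct d hmd d' hmd' hdd
    have pinj : ∀ x y : ℚ, IsHalfInt x → IsHalfInt y → Dom b x → Dom b y →
        p b x = p b y → x = y := by
      intro x y hx hy dx dy h
      have := congrArg (g b) h
      rwa [g_p hb hx dx, g_p hb hy dy] at this
    have hxl := D.half_left d hmd; have hxr := D.half_right d hmd
    have hyl := D.half_left d' hmd'; have hyr := D.half_right d' hmd'
    exact ⟨fun h => k1 (pinj _ _ hxl hyl e1 e1' h),
           fun h => k2 (pinj _ _ hxl hyr e1 e2' h),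
           fun h => k3 (pinj _ _ hxr hyl e2 e1' h),
           fun h => k4 (pinj _ _ hxr hyr e2 e2' h)⟩
  nested := by
    intro c hc x hx h1 h2
    obtain ⟨c', hc', rfl⟩ := Finset.mem_image.mp hc
    have hm := Finset.mem_of_mem_erase hc'
    obtain ⟨d1, d2⟩ := dom_arc hb D hmem c' hm (Finset.ne_of_mem_erase hc')
    simp only [Prod.map] at h1 h2 ⊢
    have hl := D.half_left c' hm
    have hr := D.half_right c' hm
    -- pull x back through g
    have hgxh : IsHalfInt (g b x) := g_half hx
    have l1 : c'.1 < g b x := by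
      have := g_strictMono b h1
      rwa [g_p hb hl d1] at this
    have l2 : g b x < c'.2 := by
      have := g_strictMono b h2
      rwa [g_p hb hr d2] at this
    obtain ⟨e, he, hee, hn1, hn2⟩ := D.nested c' hm (g b x) hgxh l1 l2
    have heneq : e ≠ (b - 1, b) := by
      rintro rfl
      rcases hee with h | h
      · exact g_ne_left b x h
      · exact g_ne_right b x h
    obtain ⟨f1, f2⟩ := dom_arc hb D hmem e he heneq
    have hel := D.half_left e he
    have her := D.half_right e he
    refine ⟨Prod.map (p b) (p b) e,
      Finset.mem_image_of_mem _ (Finset.mem_erase.mpr ⟨heneq, he⟩), ?_, ?_, ?_⟩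
    · rcases hee with h | h
      · left; show x = p b e.1; rw [← h, p_g]
      · right; show x = p b e.2; rw [← h, p_g]
    · exact p_le_of_le hb hl hel d1 f1 hn1
    · exact p_le_of_le hb her hr f2 d2 hn2

end CupAux

namespace CupAux

lemma p_inj {b x y : ℚ} (hb : IsHalfInt b) (hx : IsHalfInt x) (hy : IsHalfInt y)
    (dx : Dom b x) (dy : Dom b y) (h : p b x = p b y) : x = y := by
  have := congrArg (g b) h
  rwa [g_p hb hx dx, g_p hb hy dy] at this

lemma snd_injOn (D : ArcDiagram) {c c' : ℚ × ℚ} (hc : c ∈ D.arcs) (hc' : c' ∈ D.arcs)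
    (h : c.2 = c'.2) : c = c' := by
  by_contra hne
  exact (D.distinct c hc c' hc' hne).2.2.2 h

lemma image_snd_map (f : ℚ → ℚ) (A : Finset (ℚ × ℚ)) :
    (A.image (Prod.map f f)).image Prod.snd = (A.image Prod.snd).image f := by
  rw [Finset.image_image, Finset.image_image]
  rfl

lemma image_snd_erase (D : ArcDiagram) {b : ℚ} (hmem : (b - 1, b) ∈ D.arcs) :
    (D.arcs.erase (b - 1, b)).image Prod.snd = (D.arcs.image Prod.snd).erase b := by
  ext y
  simp only [Finset.mem_image, Finset.mem_erase]
  constructor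
  · rintro ⟨c, ⟨hne, hcm⟩, rfl⟩
    refine ⟨?_, c, hcm, rfl⟩
    intro hy
    exact hne (snd_injOn D hcm hmem hy)
  · rintro ⟨hy, c, hc, rfl⟩
    refine ⟨c, ⟨?_, hc⟩, rfl⟩
    intro h
    exact hy (by rw [h])

lemma insertD_contractD (b : ℚ) (hb : IsHalfInt b) (D : ArcDiagram)
    (hmem : (b - 1, b) ∈ D.arcs) :
    insertD b hb (contractD b hb D hmem) = D := by
  apply diagram_ext
  show insert (b - 1, b)
      (((D.arcs.erase (b - 1, b)).image (Prod.map (p b) (p b))).image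
        (Prod.map (g b) (g b))) = D.arcs
  rw [Finset.image_image]
  have himg : (D.arcs.erase (b - 1, b)).image (Prod.map (g b) (g b) ∘ Prod.map (p b) (p b))
      = D.arcs.erase (b - 1, b) := by
    rw [show (D.arcs.erase (b - 1, b) : Finset (ℚ × ℚ))
        = (D.arcs.erase (b - 1, b)).image id by rw [Finset.image_id]]
    rw [Finset.image_image]
    apply Finset.image_congr
    intro c hc
    simp only [Finset.coe_image, Set.mem_image, Finset.mem_coe] at hc
    have hc' : c ∈ D.arcs.erase (b - 1, b) := by simpa using hc
    have hm := Finset.mem_of_mem_erase hc'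
    obtain ⟨d1, d2⟩ := dom_arc hb D hmem c hm (Finset.ne_of_mem_erase hc')
    show Prod.map (g b) (g b) (Prod.map (p b) (p b) (id c)) = id c
    simp only [id, Prod.map]
    exact Prod.ext (g_p hb (D.half_left c hm) d1) (g_p hb (D.half_right c hm) d2)
  rw [himg, Finset.insert_erase hmem]

lemma contractD_card (b : ℚ) (hb : IsHalfInt b) (D : ArcDiagram)
    (hmem : (b - 1, b) ∈ D.arcs) :
    (contractD b hb D hmem).arcs.card + 1 = D.arcs.card := by
  have := insertD_card b hb (contractD b hb D hmem)
  rw [insertD_contractD b hb D hmem] at this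
  omega

lemma contractD_rightset (b : ℚ) (hb : IsHalfInt b) (D : ArcDiagram)
    (hmem : (b - 1, b) ∈ D.arcs) :
    (contractD b hb D hmem).arcs.image Prod.snd
      = ((D.arcs.image Prod.snd).erase b).image (p b) := by
  show ((D.arcs.erase (b - 1, b)).image (Prod.map (p b) (p b))).image Prod.snd = _
  rw [image_snd_map, image_snd_erase D hmem]

end CupAux

namespace CupAux

def emptyD : ArcDiagram where
  arcs := ∅
  half_left := by simp
  half_right := by simp
  lt := by simp
  distinct := by simp
  nested := by simp

end CupAux

open CupAux

/-- The map sending a cup diagram with exactly `n` cups to the set of right endpoints of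
its cups is a bijection from `Λ_n` onto the set of `n`-element subsets of `ℤ + 1/2`:
it is well-defined (the right endpoints form an `n`-element set of half-integers), and for
every `n`-element set `S` of half-integers there is exactly one cup diagram with `n` cups
whose set of right endpoints of cups equals `S`. -/
theorem cupDiagram_rightEndpoints_bijective (n : ℕ) :
    (∀ D : ArcDiagram, D.arcs.card = n →
        (D.arcs.image Prod.snd).card = n ∧ ∀ x ∈ D.arcs.image Prod.snd, IsHalfInt x) ∧
    (∀ S : Finset ℚ, S.card = n → (∀ x ∈ S, IsHalfInt x) →
        ∃! D : ArcDiagram, D.arcs.card = n ∧ D.arcs.image Prod.snd = S) := by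
  constructor
  · -- well-definedness
    intro D hD
    constructor
    · rw [Finset.card_image_of_injOn, hD]
      intro c hc c' hc' h
      exact snd_injOn D hc hc' h
    · intro x hx
      obtain ⟨c, hc, rfl⟩ := Finset.mem_image.mp hx
      exact D.half_right c hc
  · -- existence and uniqueness
    induction n with
    | zero =>
      intro S hS _
      rw [Finset.card_eq_zero] at hS
      subst hS
      refine ⟨emptyD, ⟨rfl, rfl⟩, ?_⟩
      intro D ⟨hc, _⟩
      apply diagram_ext
      rw [Finset.card_eq_zero] at hc
      exact hc
    | succ n ih =>
      intro S hS hShalf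
      have hne : S.Nonempty := Finset.card_pos.mp (by omega)
      set b := S.min' hne with hbdef
      have hbS : b ∈ S := S.min'_mem hne
      have hb : IsHalfInt b := hShalf b hbS
      have hdomS : ∀ s ∈ S.erase b, Dom b s := by
        intro s hs
        exact Or.inr (lt_of_le_of_ne (S.min'_le s (Finset.mem_of_mem_erase hs))
          (Ne.symm (Finset.ne_of_mem_erase hs)))
      set T := (S.erase b).image (p b) with hTdef
      have hTcard : T.card = n := by
        rw [hTdef, Finset.card_image_of_injOn, Finset.card_erase_of_mem hbS, hS]
        · omega
        intro x hx y hy h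
        have hx' : x ∈ S.erase b := hx
        have hy' : y ∈ S.erase b := hy
        exact p_inj hb (hShalf x (Finset.mem_of_mem_erase hx'))
          (hShalf y (Finset.mem_of_mem_erase hy')) (hdomS x hx') (hdomS y hy') h
      have hThalf : ∀ t ∈ T, IsHalfInt t := by
        intro t ht
        obtain ⟨s, hs, rfl⟩ := Finset.mem_image.mp ht
        exact p_half (hShalf s (Finset.mem_of_mem_erase hs))
      obtain ⟨E₀, ⟨hEc, hEr⟩, hEuniq⟩ := ih T hTcard hThalf
      have himgT : T.image (g b) = S.erase b := by
        rw [hTdef, Finset.image_image]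
        ext y
        simp only [Finset.mem_image, Function.comp]
        constructor
        · rintro ⟨s, hs, rfl⟩
          rw [g_p hb (hShalf s (Finset.mem_of_mem_erase hs)) (hdomS s hs)]
          exact hs
        · intro hy
          exact ⟨y, hy, g_p hb (hShalf y (Finset.mem_of_mem_erase hy)) (hdomS y hy)⟩
      have hinsR : (insertD b hb E₀).arcs.image Prod.snd = S := by
        rw [insertD_rightset, hEr, himgT, Finset.insert_erase hbS]
      refine ⟨insertD b hb E₀, ⟨by rw [insertD_card, hEc], hinsR⟩, ?_⟩
      intro D ⟨hDc, hDr⟩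
      have hbmem : b ∈ D.arcs.image Prod.snd := by rw [hDr]; exact hbS
      have hmin : ∀ s ∈ D.arcs.image Prod.snd, b ≤ s := by
        rw [hDr]; exact fun s hs => S.min'_le s hs
      have hmem := min_cup_mem D b hb hbmem hmin
      have hCc : (contractD b hb D hmem).arcs.card = n := by
        have := contractD_card b hb D hmem
        omega
      have hCr : (contractD b hb D hmem).arcs.image Prod.snd = T := by
        rw [contractD_rightset, hDr, hTdef]
      have hCE : contractD b hb D hmem = E₀ := hEuniq _ ⟨hCc, hCr⟩
      calc D = insertD b hb (contractD b hb D hmem) :=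
              (insertD_contractD b hb D hmem).symm
        _ = insertD b hb E₀ := by rw [hCE]
end

section
/- Let λ̲ be a cup diagram with n cups. Then the assignment sending each cup with endpoints a<b to b+1/2 is a ∇-orientation of λ̲; moreover, if ν is any ∇-orientation of λ̲ with assigned values k_1 > k_2 > … > k_n, and m_1 > m_2 > … > m_n are the values assigned by the former (i.e. the right endpoints of the cups increased by 1/2, listed decreasingly), then k_i ≤ m_i for every 1 ≤ i ≤ n. -/
/-- A `∇`-orientation of a cup diagram `lam`: it assigns to each cup with endpoints
`a < b` an integer equal to `a - 1/2` or `b + 1/2`, the assigned integers being pairwise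
distinct. -/
def IsNablaOrientation (lam : ArcDiagram) (f : ℚ × ℚ → ℤ) : Prop :=
  (∀ c ∈ lam.arcs, (f c : ℚ) = c.1 - 1/2 ∨ (f c : ℚ) = c.2 + 1/2) ∧
  (∀ c ∈ lam.arcs, ∀ c' ∈ lam.arcs, f c = f c' → c = c')

/-- The assignment sending each cup with endpoints `a < b` to `b + 1/2`. -/
def rightNabla : ℚ × ℚ → ℤ := fun c => ⌊c.2 + 1/2⌋

/-! Every `∇`-orientation `ν` satisfies `ν ≤ rightNabla` cup by cup, and `rightNabla` is
injective on cups, so for every threshold `t` at least as many values of `rightNabla` as of `ν`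
are `≥ t`. In a strictly decreasing list the `i`-th entry is `≥ t` exactly when more than `i`
entries are, which turns this counting inequality into `k_i ≤ m_i`. -/

open Finset

namespace List

variable {α : Type*} [LinearOrder α]

theorem lt_length_filter_le_iff {l : List α} (hl : l.Pairwise (· > ·)) (t : α) {i : ℕ}
    (hi : i < l.length) : i < (l.filter (t ≤ ·)).length ↔ t ≤ l[i] := by
  induction l generalizing i with
  | nil => simp at hi
  | cons a l ih =>
    obtain ⟨ha, hl⟩ := List.pairwise_cons.1 hl
    by_cases hta : t ≤ a
    · cases i with
      | zero => simp [hta]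
      | succ j => simpa [hta] using ih hl (by simpa using hi)
    · have hfilter : (a :: l).filter (t ≤ ·) = [] := by
        refine List.filter_eq_nil_iff.2 fun x hx => ?_
        rcases List.mem_cons.1 hx with rfl | hx
        · simpa using hta
        · simpa using fun h : t ≤ x => hta (h.trans (ha x hx).le)
      have hget : ¬ t ≤ (a :: l)[i] := by
        cases i with
        | zero => simpa using hta
        | succ j => exact fun h => hta (h.trans (ha _ (List.getElem_mem _)).le)
      simp [hfilter, hget]

theorem lt_card_filter_toFinset_le_iff {l : List α} (hl : l.Pairwise (· > ·)) (t : α) {i : ℕ}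
    (hi : i < l.length) : i < #{x ∈ l.toFinset | t ≤ x} ↔ t ≤ l[i] := by
  rw [← lt_length_filter_le_iff hl t hi, ← List.toFinset_card_of_nodup (hl.nodup.filter _),
    List.toFinset_filter]
  simp

end List

theorem Finset.card_filter_image_le_of_le_of_injOn {ι α : Type*} [LinearOrder α] {s : Finset ι}
    {f g : ι → α} (hfg : ∀ c ∈ s, f c ≤ g c) (hg : Set.InjOn g s) (t : α) :
    #{x ∈ s.image f | t ≤ x} ≤ #{x ∈ s.image g | t ≤ x} := by
  classical
  calc #{x ∈ s.image f | t ≤ x} = #((s.filter (t ≤ f ·)).image f) := by rw [filter_image]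
    _ ≤ #{c ∈ s | t ≤ f c} := card_image_le
    _ ≤ #{c ∈ s | t ≤ g c} := card_le_card fun c hc => by
        rw [mem_filter] at hc ⊢
        exact ⟨hc.1, hc.2.trans (hfg c hc.1)⟩
    _ = #((s.filter (t ≤ g ·)).image g) :=
        (card_image_of_injOn (hg.mono (coe_subset.2 (filter_subset _ _)))).symm
    _ = #{x ∈ s.image g | t ≤ x} := by rw [filter_image]

namespace ArcDiagram

variable (lam : ArcDiagram)

theorem rightNabla_eq {c : ℚ × ℚ} (hc : c ∈ lam.arcs) : (rightNabla c : ℚ) = c.2 + 1/2 := by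
  obtain ⟨k, hk⟩ := lam.half_right c hc
  rw [rightNabla, hk, add_assoc, add_halves, ← Int.cast_one, ← Int.cast_add, Int.floor_intCast]

theorem rightNabla_injOn : Set.InjOn rightNabla lam.arcs := by
  intro c hc c' hc' h
  have hq : c.2 + 1/2 = c'.2 + 1/2 := by
    rw [← lam.rightNabla_eq hc, ← lam.rightNabla_eq hc', h]
  by_contra hne
  exact (lam.distinct c hc c' hc' hne).2.2.2 (add_right_cancel hq)

theorem isNablaOrientation_rightNabla : IsNablaOrientation lam rightNabla :=
  ⟨fun _ hc => Or.inr (lam.rightNabla_eq hc), fun _ hc _ hc' => lam.rightNabla_injOn hc hc'⟩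

end ArcDiagram

theorem IsNablaOrientation.le_rightNabla {lam : ArcDiagram} {ν : ℚ × ℚ → ℤ}
    (hν : IsNablaOrientation lam ν) {c : ℚ × ℚ} (hc : c ∈ lam.arcs) : ν c ≤ rightNabla c := by
  have hlt := lam.lt c hc
  have : (ν c : ℚ) ≤ rightNabla c := by
    rcases hν.1 c hc with h | h <;> linarith [lam.rightNabla_eq hc]
  exact_mod_cast this

theorem rightNabla_isNablaOrientation_and_maximal_general (lam : ArcDiagram) :
    IsNablaOrientation lam rightNabla ∧
    ∀ ν : ℚ × ℚ → ℤ, IsNablaOrientation lam ν →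
      ∀ ks ms : List ℤ, ks.Pairwise (· > ·) → ms.Pairwise (· > ·) →
        (∀ x : ℤ, x ∈ ks ↔ x ∈ lam.arcs.image ν) →
        (∀ x : ℤ, x ∈ ms ↔ x ∈ lam.arcs.image rightNabla) →
        ∀ (i : ℕ) (h1 : i < ks.length) (h2 : i < ms.length),
          ks.get ⟨i, h1⟩ ≤ ms.get ⟨i, h2⟩ := by
  refine ⟨lam.isNablaOrientation_rightNabla, fun ν hν ks ms hks hms hk hm i h1 h2 => ?_⟩
  have hk' : ks.toFinset = lam.arcs.image ν := Finset.ext <| by simpa using hk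
  have hm' : ms.toFinset = lam.arcs.image rightNabla := Finset.ext <| by simpa using hm
  simp only [List.get_eq_getElem]
  rw [← List.lt_card_filter_toFinset_le_iff hms _ h2, hm']
  calc i < #{x ∈ ks.toFinset | ks[i] ≤ x} :=
        (List.lt_card_filter_toFinset_le_iff hks _ h1).2 le_rfl
    _ ≤ #{x ∈ lam.arcs.image rightNabla | ks[i] ≤ x} := hk' ▸
        card_filter_image_le_of_le_of_injOn (fun _ => hν.le_rightNabla) lam.rightNabla_injOn _

/-- For a cup diagram `lam` with `n` cups, the assignment sending each cup with endpoints
`a < b` to `b + 1/2` is a `∇`-orientation; moreover, if `ν` is any `∇`-orientation of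
`lam` with assigned values `k_1 > … > k_n` and `m_1 > … > m_n` are the values assigned by
the former, then `k_i ≤ m_i` for every `i`. -/
theorem rightNabla_isNablaOrientation_and_maximal (lam : ArcDiagram) (n : ℕ)
    (hn : lam.arcs.card = n) :
    IsNablaOrientation lam rightNabla ∧
    ∀ ν : ℚ × ℚ → ℤ, IsNablaOrientation lam ν →
      ∀ ks ms : List ℤ, ks.Pairwise (· > ·) → ms.Pairwise (· > ·) →
        (∀ x : ℤ, x ∈ ks ↔ x ∈ lam.arcs.image ν) →
        (∀ x : ℤ, x ∈ ms ↔ x ∈ lam.arcs.image rightNabla) →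
        ∀ (i : ℕ) (h1 : i < ks.length) (h2 : i < ms.length),
          ks.get ⟨i, h1⟩ ≤ ms.get ⟨i, h2⟩ :=
  rightNabla_isNablaOrientation_and_maximal_general lam
end

section
/- Let μ̄ be a cap diagram with n caps. Then the assignment sending each cap with endpoints a<b to b−1/2 is a Δ-orientation of μ̄; moreover, if ν is any Δ-orientation of μ̄ with assigned values k_1 > k_2 > … > k_n, and m_1 > m_2 > … > m_n are the values assigned by the former (i.e. the right endpoints of the caps decreased by 1/2, listed decreasingly), then k_i ≤ m_i for every 1 ≤ i ≤ n. -/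
/-- A `Δ`-orientation of a cap diagram `mu`: it assigns to each cap with endpoints
`a < b` an integer `m` with `a < m < b` such that every other cap with endpoints
`a' < m < b'` satisfies `a' < a` and `b < b'`, the assigned integers being pairwise
distinct. -/
def IsDeltaOrientation (mu : ArcDiagram) (f : ℚ × ℚ → ℤ) : Prop :=
  (∀ c ∈ mu.arcs, c.1 < (f c : ℚ) ∧ (f c : ℚ) < c.2 ∧
      ∀ c' ∈ mu.arcs, c' ≠ c → c'.1 < (f c : ℚ) → (f c : ℚ) < c'.2 →
        c'.1 < c.1 ∧ c.2 < c'.2) ∧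
  (∀ c ∈ mu.arcs, ∀ c' ∈ mu.arcs, f c = f c' → c = c')

/-- The assignment sending each cap with endpoints `a < b` to `b - 1/2`. -/
def rightDelta : ℚ × ℚ → ℤ := fun c => ⌊c.2 - 1/2⌋

/-!
The point `b - 1/2` lies just left of the right end of the cap `(a, b)`, so any other cap
around it must end after `b`, and by nestedness it cannot start inside `(a, b)`.

Every `Δ`-orientation `ν` satisfies `ν c < b` for a cap `c = (a, b)`, and `b` is a half-integer,
so `ν c ≤ b - 1/2 = rightDelta c`. Both assignments are injective, so for every threshold `t`
at least as many caps get a value `≥ t` from `rightDelta` as from `ν`; for strictly decreasing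
lists this counting comparison is exactly `k_i ≤ m_i`.
-/

namespace IsHalfInt

variable {q : ℚ}

lemma add_one_le_of_lt {r : ℚ} (hq : IsHalfInt q) (hr : IsHalfInt r) (h : q < r) :
    q + 1 ≤ r := by
  obtain ⟨j, rfl⟩ := hq
  obtain ⟨k, rfl⟩ := hr
  have : (j : ℚ) + 1 ≤ k := by exact_mod_cast (show (j : ℚ) < k by linarith)
  linarith

lemma floor_sub_half (hq : IsHalfInt q) : ((⌊q - 1/2⌋ : ℤ) : ℚ) = q - 1/2 := by
  obtain ⟨k, rfl⟩ := hq
  simp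

lemma intCast_lt_iff_le_floor (hq : IsHalfInt q) (m : ℤ) :
    (m : ℚ) < q ↔ m ≤ ⌊q - 1/2⌋ := by
  obtain ⟨k, rfl⟩ := hq
  simp only [add_sub_cancel_right, Int.floor_intCast]
  constructor
  · intro h
    exact Int.lt_add_one_iff.1 (by exact_mod_cast (show (m : ℚ) < k + 1 by linarith))
  · intro h
    have : (m : ℚ) ≤ k := by exact_mod_cast h
    linarith

end IsHalfInt

namespace ArcDiagram

variable (mu : ArcDiagram) {c c' : ℚ × ℚ}

lemma eq_of_shared_endpoint (hc : c ∈ mu.arcs) (hc' : c' ∈ mu.arcs)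
    (h : c.1 = c'.1 ∨ c.1 = c'.2 ∨ c.2 = c'.1 ∨ c.2 = c'.2) : c = c' := by
  by_contra hne
  have := mu.distinct c hc c' hc' hne
  tauto

lemma rightDelta_cast (hc : c ∈ mu.arcs) : (rightDelta c : ℚ) = c.2 - 1/2 :=
  (mu.half_right c hc).floor_sub_half

lemma le_rightDelta_of_lt_right (hc : c ∈ mu.arcs) {m : ℤ} (h : (m : ℚ) < c.2) :
    m ≤ rightDelta c :=
  ((mu.half_right c hc).intCast_lt_iff_le_floor m).1 h

lemma right_le_of_left_mem_Ioo (hc : c ∈ mu.arcs) (hc' : c' ∈ mu.arcs)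
    (h : c'.1 ∈ Set.Ioo c.1 c.2) : c'.2 ≤ c.2 := by
  obtain ⟨d, hd, hx, -, hdr⟩ := mu.nested c hc c'.1 (mu.half_left c' hc') h.1 h.2
  obtain rfl : d = c' := mu.eq_of_shared_endpoint hd hc' (by tauto)
  exact hdr

end ArcDiagram

theorem rightDelta_isDeltaOrientation (mu : ArcDiagram) :
    IsDeltaOrientation mu rightDelta := by
  refine ⟨fun c hc => ?_, fun c hc c' hc' h => ?_⟩
  · have hcast := mu.rightDelta_cast hc
    have hlen := (mu.half_left c hc).add_one_le_of_lt (mu.half_right c hc) (mu.lt c hc)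
    refine ⟨by linarith, by linarith, fun c' hc' hne h1 h2 => ?_⟩
    have hright : c.2 < c'.2 := by
      refine lt_of_le_of_ne ?_ (fun h => hne (mu.eq_of_shared_endpoint hc' hc (by tauto)))
      by_contra! hlt
      linarith [(mu.half_right c' hc').add_one_le_of_lt (mu.half_right c hc) hlt]
    -- if `c'` started inside `c`, nestedness would force `c'.2 ≤ c.2`
    refine ⟨lt_of_not_ge fun hle => ?_, hright⟩
    have hne1 : c.1 ≠ c'.1 := fun h => hne (mu.eq_of_shared_endpoint hc' hc (by tauto))
    have := mu.right_le_of_left_mem_Ioo hc hc' ⟨lt_of_le_of_ne hle hne1, by linarith⟩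
    linarith
  · have hcast := mu.rightDelta_cast hc
    have hcast' := mu.rightDelta_cast hc'
    rw [h] at hcast
    exact mu.eq_of_shared_endpoint hc hc' (Or.inr (Or.inr (Or.inr (by linarith))))

lemma IsDeltaOrientation.injOn {mu : ArcDiagram} {ν : ℚ × ℚ → ℤ}
    (hν : IsDeltaOrientation mu ν) : Set.InjOn ν mu.arcs :=
  fun c hc c' hc' h => hν.2 c hc c' hc' h

lemma IsDeltaOrientation.le_rightDelta {mu : ArcDiagram} {ν : ℚ × ℚ → ℤ}
    (hν : IsDeltaOrientation mu ν) {c : ℚ × ℚ} (hc : c ∈ mu.arcs) :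
    ν c ≤ rightDelta c :=
  mu.le_rightDelta_of_lt_right hc (hν.1 c hc).2.1

lemma List.Pairwise.le_getElem_iff_countP {α : Type*} [LinearOrder α] {l : List α}
    (hl : l.Pairwise (· > ·)) {i : ℕ} (hi : i < l.length) (t : α) :
    t ≤ l[i] ↔ i + 1 ≤ l.countP (t ≤ ·) := by
  induction l generalizing i with
  | nil => simp at hi
  | cons a l ih =>
    obtain ⟨ha, hl⟩ := List.pairwise_cons.1 hl
    by_cases hta : t ≤ a
    · cases i with
      | zero => simp [hta]
      | succ i => simp [hta, ih hl (Nat.lt_of_succ_lt_succ hi)]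
    · have hfilter : (a :: l).countP (t ≤ ·) = 0 := by
        simp only [List.countP_eq_zero, List.mem_cons, decide_eq_true_eq]
        rintro x (rfl | hx)
        · exact hta
        · exact fun htx => hta (htx.trans (ha x hx).le)
      rw [hfilter]
      cases i with
      | zero => simpa using hta
      | succ i =>
        simp only [List.getElem_cons_succ, Nat.le_zero, Nat.add_one_ne_zero, iff_false, not_le]
        exact (ha _ (List.getElem_mem _)).trans (lt_of_not_ge hta)

lemma List.Pairwise.getElem_le_getElem_of_countP_le {α : Type*} [LinearOrder α]
    {l l' : List α} (hl : l.Pairwise (· > ·)) (hl' : l'.Pairwise (· > ·))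
    (hcount : ∀ t, l.countP (t ≤ ·) ≤ l'.countP (t ≤ ·)) {i : ℕ} (hi : i < l.length)
    (hi' : i < l'.length) : l[i] ≤ l'[i] :=
  (hl'.le_getElem_iff_countP hi' _).2 <|
    ((hl.le_getElem_iff_countP hi _).1 le_rfl).trans (hcount _)

lemma Finset.card_filter_image_le_of_le {α β : Type*} [LinearOrder α] [DecidableEq α]
    {s : Finset β} {f g : β → α} (hf : Set.InjOn f s) (hg : Set.InjOn g s)
    (hfg : ∀ x ∈ s, f x ≤ g x) (t : α) :
    ((s.image f).filter (t ≤ ·)).card ≤ ((s.image g).filter (t ≤ ·)).card := by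
  rw [Finset.filter_image, Finset.filter_image,
    Finset.card_image_of_injOn (hf.mono (Finset.filter_subset _ _)),
    Finset.card_image_of_injOn (hg.mono (Finset.filter_subset _ _))]
  exact Finset.card_le_card (Finset.monotone_filter_right _ fun x hx ht => ht.trans (hfg x hx))

theorem rightDelta_isDeltaOrientation_and_maximal_general (mu : ArcDiagram) :
    IsDeltaOrientation mu rightDelta ∧
    ∀ ν : ℚ × ℚ → ℤ, IsDeltaOrientation mu ν →
      ∀ ks ms : List ℤ, ks.Pairwise (· > ·) → ms.Pairwise (· > ·) →
        (∀ x : ℤ, x ∈ ks ↔ x ∈ mu.arcs.image ν) →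
        (∀ x : ℤ, x ∈ ms ↔ x ∈ mu.arcs.image rightDelta) →
        ∀ (i : ℕ) (h1 : i < ks.length) (h2 : i < ms.length),
          ks.get ⟨i, h1⟩ ≤ ms.get ⟨i, h2⟩ := by
  have hright := rightDelta_isDeltaOrientation mu
  refine ⟨hright, fun ν hν ks ms hks hms hks_mem hms_mem i h1 h2 => ?_⟩
  have hks_toFinset : ks.toFinset = mu.arcs.image ν :=
    Finset.ext fun x => by simpa using hks_mem x
  have hms_toFinset : ms.toFinset = mu.arcs.image rightDelta :=
    Finset.ext fun x => by simpa using hms_mem x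
  refine hks.getElem_le_getElem_of_countP_le hms (fun t => ?_) h1 h2
  rw [← List.Nodup.card_eq_countP (hks.imp ne_of_gt),
    ← List.Nodup.card_eq_countP (hms.imp ne_of_gt), hks_toFinset, hms_toFinset]
  exact Finset.card_filter_image_le_of_le hν.injOn hright.injOn
    (fun c hc => hν.le_rightDelta hc) t

/-- For a cap diagram `mu` with `n` caps, the assignment sending each cap with endpoints
`a < b` to `b - 1/2` is a `Δ`-orientation; moreover, if `ν` is any `Δ`-orientation of
`mu` with assigned values `k_1 > … > k_n` and `m_1 > … > m_n` are the values assigned by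
the former, then `k_i ≤ m_i` for every `i`. -/
theorem rightDelta_isDeltaOrientation_and_maximal (mu : ArcDiagram) (n : ℕ)
    (hn : mu.arcs.card = n) :
    IsDeltaOrientation mu rightDelta ∧
    ∀ ν : ℚ × ℚ → ℤ, IsDeltaOrientation mu ν →
      ∀ ks ms : List ℤ, ks.Pairwise (· > ·) → ms.Pairwise (· > ·) →
        (∀ x : ℤ, x ∈ ks ↔ x ∈ mu.arcs.image ν) →
        (∀ x : ℤ, x ∈ ms ↔ x ∈ mu.arcs.image rightDelta) →
        ∀ (i : ℕ) (h1 : i < ks.length) (h2 : i < ms.length),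
          ks.get ⟨i, h1⟩ ≤ ms.get ⟨i, h2⟩ :=
  rightDelta_isDeltaOrientation_and_maximal_general mu
end

section
/- If (i_1, …, i_k) is the target residue sequence of an up-down tableau, then i_j ≠ i_{j+1} for every 1 ≤ j < k; that is, no two consecutive entries of a target residue sequence of an up-down tableau are equal. -/
/-- One step of an up-down tableau together with its target residue: `ν` is obtained from
`μ` by adding a box `b` (target residue `col b - row b`) or by removing a box `b`
(target residue `col b - row b - 1`). -/
def UDStepRes (μ ν : YoungDiagram) (r : ℤ) : Prop :=
  (∃ b : ℕ × ℕ, b ∉ μ.cells ∧ ν.cells = insert b μ.cells ∧ r = (b.2 : ℤ) - (b.1 : ℤ)) ∨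
  (∃ b : ℕ × ℕ, b ∈ μ.cells ∧ ν.cells = μ.cells.erase b ∧ r = (b.2 : ℤ) - (b.1 : ℤ) - 1)

/-- `IsUDTab μ l ν` holds if `l` is the target residue sequence of an up-down tableau
starting at `μ` and ending at `ν`. -/
def IsUDTab : YoungDiagram → List ℤ → YoungDiagram → Prop
  | μ, [], ν => μ = ν
  | μ, r :: rs, ν => ∃ μ', UDStepRes μ μ' r ∧ IsUDTab μ' rs ν

lemma udstep_key {μ ν ρ : YoungDiagram} {r : ℤ}
    (h1 : UDStepRes μ ν r) (h2 : UDStepRes ν ρ r) : False := by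
  obtain ⟨⟨i,j⟩, hb1, hc1, hr1⟩ | ⟨⟨i,j⟩, hb1, hc1, hr1⟩ := h1 <;>
    obtain ⟨⟨k,l⟩, hb2, hc2, hr2⟩ | ⟨⟨k,l⟩, hb2, hc2, hr2⟩ := h2 <;>
    simp only [YoungDiagram.mem_cells] at hb1 hb2
  ·
    -- add (i,j), add (k,l)
    have mν : ∀ x : ℕ×ℕ, x ∈ ν ↔ x = (i,j) ∨ x ∈ μ := by
      intro x; rw [← YoungDiagram.mem_cells, hc1, Finset.mem_insert, YoungDiagram.mem_cells]
    have mρ : ∀ x : ℕ×ℕ, x ∈ ρ ↔ x = (k,l) ∨ x ∈ ν := by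
      intro x; rw [← YoungDiagram.mem_cells, hc2, Finset.mem_insert, YoungDiagram.mem_cells]
    simp only at hr1 hr2
    have hij : (i,j) ∈ ν := (mν _).2 (Or.inl rfl)
    have hne : (k,l) ≠ (i,j) := fun h => hb2 (h ▸ hij)
    have hne' : ¬ (k = i ∧ l = j) := by simpa [Prod.ext_iff] using hne
    have hnat : j + k = i + l := by omega
    rcases lt_or_gt_of_ne (show i ≠ k by omega) with hik | hik
    · have hjl : j < l := by omega
      have h3 : (k,l) ∈ ρ := (mρ _).2 (Or.inl rfl)
      have h4 : (i,l) ∈ ρ := ρ.up_left_mem hik.le le_rfl h3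
      have h5 : (i,l) ∈ ν := by
        rcases (mρ _).1 h4 with h | h
        · exact absurd h (by simp [Prod.ext_iff]; omega)
        · exact h
      have h6 : (i,l) ∈ μ := by
        rcases (mν _).1 h5 with h | h
        · exact absurd h (by simp [Prod.ext_iff]; omega)
        · exact h
      exact hb1 (μ.up_left_mem le_rfl hjl.le h6)
    · have hjl : l < j := by omega
      have h4 : (k,j) ∈ ν := ν.up_left_mem hik.le le_rfl hij
      have h5 : (k,j) ∈ μ := by
        rcases (mν _).1 h4 with h | h
        · exact absurd h (by simp [Prod.ext_iff]; omega)
        · exact h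
      exact hb2 ((mν _).2 (Or.inr (μ.up_left_mem le_rfl hjl.le h5)))
  ·
    -- add (i,j), remove (k,l)
    have mν : ∀ x : ℕ×ℕ, x ∈ ν ↔ x = (i,j) ∨ x ∈ μ := by
      intro x; rw [← YoungDiagram.mem_cells, hc1, Finset.mem_insert, YoungDiagram.mem_cells]
    have mρ : ∀ x : ℕ×ℕ, x ∈ ρ ↔ x ≠ (k,l) ∧ x ∈ ν := by
      intro x; rw [← YoungDiagram.mem_cells, hc2, Finset.mem_erase, YoungDiagram.mem_cells]
    simp only at hr1 hr2
    have hnat : j + k + 1 = i + l := by omega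
    have hklμ : (k,l) ∈ μ := by
      rcases (mν _).1 hb2 with h | h
      · exact absurd h (by simp [Prod.ext_iff]; omega)
      · exact h
    rcases le_or_gt i k with hik | hik
    · have hjl : j < l := by omega
      exact hb1 (μ.up_left_mem hik hjl.le hklμ)
    · -- k < i, l ≤ j
      have hlj : l ≤ j := by omega
      have hij : (i,j) ∈ ν := (mν _).2 (Or.inl rfl)
      have h4 : (k+1,l) ∈ ν := ν.up_left_mem hik hlj hij
      have h5 : (k+1,l) ∈ ρ := (mρ _).2 ⟨by simp, h4⟩
      have h6 : (k,l) ∈ ρ := ρ.up_left_mem (Nat.le_succ k) le_rfl h5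
      exact ((mρ _).1 h6).1 rfl
  ·
    -- remove (i,j), add (k,l)
    have mν : ∀ x : ℕ×ℕ, x ∈ ν ↔ x ≠ (i,j) ∧ x ∈ μ := by
      intro x; rw [← YoungDiagram.mem_cells, hc1, Finset.mem_erase, YoungDiagram.mem_cells]
    have mρ : ∀ x : ℕ×ℕ, x ∈ ρ ↔ x = (k,l) ∨ x ∈ ν := by
      intro x; rw [← YoungDiagram.mem_cells, hc2, Finset.mem_insert, YoungDiagram.mem_cells]
    simp only at hr1 hr2
    have hnat : j + k = i + l + 1 := by omega
    rcases le_or_gt k i with hik | hik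
    · have hlj : l < j := by omega
      have h3 : (k,l) ∈ μ := μ.up_left_mem hik hlj.le hb1
      exact hb2 ((mν _).2 ⟨by simp [Prod.ext_iff]; omega, h3⟩)
    · have hjl : j ≤ l := by omega
      have h3 : (k,l) ∈ ρ := (mρ _).2 (Or.inl rfl)
      have h4 : (i,j) ∈ ρ := ρ.up_left_mem hik.le hjl h3
      have h5 : (i,j) ∈ ν := by
        rcases (mρ _).1 h4 with h | h
        · exact absurd h (by simp [Prod.ext_iff]; omega)
        · exact h
      exact ((mν _).1 h5).1 rfl
  ·
    -- remove (i,j), remove (k,l)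
    have mν : ∀ x : ℕ×ℕ, x ∈ ν ↔ x ≠ (i,j) ∧ x ∈ μ := by
      intro x; rw [← YoungDiagram.mem_cells, hc1, Finset.mem_erase, YoungDiagram.mem_cells]
    have mρ : ∀ x : ℕ×ℕ, x ∈ ρ ↔ x ≠ (k,l) ∧ x ∈ ν := by
      intro x; rw [← YoungDiagram.mem_cells, hc2, Finset.mem_erase, YoungDiagram.mem_cells]
    simp only at hr1 hr2
    have hkl := (mν _).1 hb2
    have hne' : ¬ (k = i ∧ l = j) := by
      intro h; exact hkl.1 (by simp [Prod.ext_iff, h.1, h.2])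
    have hnat : j + k = i + l := by omega
    rcases lt_or_gt_of_ne (show i ≠ k by omega) with hik | hik
    · have hjl : j < l := by omega
      have h4 : (i,j) ∈ ν := ν.up_left_mem hik.le hjl.le hb2
      exact ((mν _).1 h4).1 rfl
    · have hjl : l < j := by omega
      have h3 : (k,j) ∈ μ := μ.up_left_mem hik.le le_rfl hb1
      have h4 : (k,j) ∈ ν := (mν _).2 ⟨by simp [Prod.ext_iff]; omega, h3⟩
      have h5 : (k,j) ∈ ρ := (mρ _).2 ⟨by simp [Prod.ext_iff]; omega, h4⟩
      have h6 : (k,l) ∈ ρ := ρ.up_left_mem le_rfl hjl.le h5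
      exact ((mρ _).1 h6).1 rfl

lemma udtab_aux : ∀ (l : List ℤ) (μ ν : YoungDiagram), IsUDTab μ l ν →
    ∀ (j : ℕ) (a b : ℤ), l[j]? = some a → l[j + 1]? = some b → a ≠ b := by
  intro l
  induction l with
  | nil => intro μ ν h j a b ha; simp at ha
  | cons r rs ih =>
    intro μ ν h j a b ha hb
    obtain ⟨μ', hstep, htab⟩ := h
    cases j with
    | zero =>
      simp only [List.getElem?_cons_zero, Option.some.injEq] at ha
      subst ha
      rw [List.getElem?_cons_succ] at hb
      have hb' : rs[0]? = some b := hb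
      cases rs with
      | nil => simp at hb'
      | cons s rs' =>
        simp only [List.getElem?_cons_zero, Option.some.injEq] at hb'
        subst hb'
        obtain ⟨μ'', hstep2, _⟩ := htab
        rintro rfl
        exact udstep_key hstep hstep2
    | succ n =>
      rw [List.getElem?_cons_succ] at ha hb
      exact ih μ' ν htab n a b ha hb


/-- No two consecutive entries of the target residue sequence of an up-down tableau are
equal. -/
theorem udTableau_consecutive_residues_ne (l : List ℤ) (lam : YoungDiagram)
    (h : IsUDTab ⊥ l lam) :
    ∀ (j : ℕ) (a b : ℤ), l[j]? = some a → l[j + 1]? = some b → a ≠ b := by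
  exact udtab_aux l ⊥ lam h
end

section
/- Let (i_1, …, i_k) be the target residue sequence of an up-down tableau of shape λ, let 1 ≤ l ≤ k, set a = i_l, and let ε ∈ {+1, −1}. Then the sequence (i_1, …, i_{l−1}, a, a+ε, a, i_{l+1}, …, i_k), obtained by replacing the entry a at position l by the three entries a, a+ε, a, is the target residue sequence of some up-down tableau of the same shape λ. -/
section UDAux

/-- `b` can be added to `μ`. -/
def UDAddable (μ : YoungDiagram) (b : ℕ × ℕ) : Prop :=
  ∀ x : ℕ × ℕ, x ≤ b → x ≠ b → x ∈ μ

/-- `b` can be removed from `μ`. -/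
def UDRemovable (μ : YoungDiagram) (b : ℕ × ℕ) : Prop :=
  ∀ x ∈ μ, b ≤ x → x = b

/-- Adding an addable cell gives a Young diagram. -/
def UDadd (μ : YoungDiagram) (b : ℕ × ℕ) (h : UDAddable μ b) : YoungDiagram :=
  ⟨insert b μ.cells, by
    rw [Finset.coe_insert]
    intro x y hyx hx
    rcases hx with rfl | hx
    · rcases eq_or_ne y x with rfl | hne
      · exact Set.mem_insert _ _
      · exact Set.mem_insert_of_mem _ (by simpa using h y hyx hne)
    · exact Set.mem_insert_of_mem _ (μ.isLowerSet hyx hx)⟩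

/-- Erasing a removable cell gives a Young diagram. -/
def UDerase (μ : YoungDiagram) (b : ℕ × ℕ) (h : UDRemovable μ b) : YoungDiagram :=
  ⟨μ.cells.erase b, by
    intro x y hyx hx
    simp only [Finset.coe_erase, Set.mem_diff, Set.mem_singleton_iff, Finset.mem_coe] at hx ⊢
    refine ⟨μ.isLowerSet hyx hx.1, fun hyb => hx.2 ?_⟩
    exact h x (by simpa using hx.1) (hyb ▸ hyx)⟩

lemma udadd_cells (μ : YoungDiagram) (b : ℕ × ℕ) (h : UDAddable μ b) :
    (UDadd μ b h).cells = insert b μ.cells := rfl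

lemma uderase_cells (μ : YoungDiagram) (b : ℕ × ℕ) (h : UDRemovable μ b) :
    (UDerase μ b h).cells = μ.cells.erase b := rfl

lemma udStep_triple {μ ν : YoungDiagram} {a ε : ℤ} (hε : ε = 1 ∨ ε = -1)
    (h : UDStepRes μ ν a) :
    ∃ κ₁ κ₂, UDStepRes μ κ₁ a ∧ UDStepRes κ₁ κ₂ (a + ε) ∧ UDStepRes κ₂ ν a := by
  rcases h with ⟨b, hb, hc, hr⟩ | ⟨b, hb, hc, hr⟩
  · -- the step adds box `b`
    have hstep : UDStepRes μ ν a := Or.inl ⟨b, hb, hc, hr⟩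
    have hbν : b ∈ ν.cells := by rw [hc]; exact Finset.mem_insert_self _ _
    have hmemν : ∀ x : ℕ × ℕ, x ∈ μ.cells → x ∈ ν.cells := by
      intro x hx; rw [hc]; exact Finset.mem_insert_of_mem hx
    rcases hε with rfl | rfl
    · -- ε = 1
      obtain ⟨r, c⟩ := b
      by_cases hup : r = 0 ∨ (r - 1, c + 1) ∈ μ
      · -- add the box (r, c+1) and remove it again
        have hnotμ : (r, c + 1) ∉ μ.cells := by
          intro hmem
          exact hb ((YoungDiagram.mem_cells _).2
            (μ.isLowerSet (by simp : ((r, c) : ℕ × ℕ) ≤ (r, c + 1))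
              ((YoungDiagram.mem_cells _).1 hmem)))
        have hnotν : (r, c + 1) ∉ ν.cells := by
          rw [hc]; intro hmem
          rcases Finset.mem_insert.1 hmem with h1 | h1
          · simp [Prod.ext_iff] at h1
          · exact hnotμ h1
        have hadd : UDAddable ν (r, c + 1) := by
          rintro ⟨i, j⟩ ⟨hi, hj⟩ hne
          simp only [ne_eq, Prod.mk.injEq, not_and] at hne
          by_cases hjc : j ≤ c
          · exact (YoungDiagram.mem_cells _).1
              (ν.isLowerSet (⟨hi, hjc⟩ : ((i, j) : ℕ × ℕ) ≤ (r, c)) hbν)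
          · have hj' : j = c + 1 := by omega
            have hir : i < r := by
              rcases Nat.lt_or_ge i r with h' | h'
              · exact h'
              · exact absurd hj' (hne (by omega))
            rcases hup with h0 | hm
            · omega
            · have : ((i, j) : ℕ × ℕ) ≤ (r - 1, c + 1) := ⟨by omega, by omega⟩
              exact (YoungDiagram.mem_cells _).1
                (ν.isLowerSet this ((YoungDiagram.mem_cells _).1 (hmemν _ hm)))
        refine ⟨ν, UDadd ν (r, c + 1) hadd, hstep, ?_, ?_⟩
        · exact Or.inl ⟨(r, c + 1), hnotν, rfl, by simp at hr ⊢; omega⟩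
        · refine Or.inr ⟨(r, c + 1), Finset.mem_insert_self _ _, ?_, by simp at hr ⊢; omega⟩
          rw [udadd_cells, Finset.erase_insert hnotν]
      · -- remove the box (r-1, c), add it back, then add b
        push_neg at hup
        obtain ⟨hr0, hnm⟩ := hup
        have hbelow : (r - 1, c) ∈ μ.cells := by
          have : ((r - 1, c) : ℕ × ℕ) ≤ (r, c) := ⟨by omega, le_refl _⟩
          have hmem := ν.isLowerSet this ((YoungDiagram.mem_cells _).1 hbν)
          have hmem' : (r - 1, c) ∈ ν.cells := (YoungDiagram.mem_cells _).2 hmem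
          rw [hc] at hmem'
          rcases Finset.mem_insert.1 hmem' with h1 | h1
          · exfalso; have := congrArg Prod.fst h1; simp at this; omega
          · exact h1
        have hrem : UDRemovable μ (r - 1, c) := by
          rintro ⟨i, j⟩ hij ⟨hi, hj⟩
          simp only at hi hj
          have hijμ : (i, j) ∈ μ.cells := (YoungDiagram.mem_cells _).2 hij
          have hjc : j = c := by
            by_contra hne
            have : ((r - 1, c + 1) : ℕ × ℕ) ≤ (i, j) := ⟨hi, by omega⟩
            exact hnm (μ.isLowerSet this hij)
          have hir : i = r - 1 := by
            by_contra hne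
            have : ((r, c) : ℕ × ℕ) ≤ (i, j) := ⟨by omega, by omega⟩
            exact hb ((YoungDiagram.mem_cells _).2 (μ.isLowerSet this hij))
          simp [hir, hjc]
        refine ⟨UDerase μ (r - 1, c) hrem, μ, ?_, ?_, hstep⟩
        · exact Or.inr ⟨(r - 1, c), hbelow, rfl, by
            simp at hr ⊢
            have : ((r - 1 : ℕ) : ℤ) = (r : ℤ) - 1 := by omega
            omega⟩
        · refine Or.inl ⟨(r - 1, c), ?_, ?_, by
            simp at hr ⊢
            have : ((r - 1 : ℕ) : ℤ) = (r : ℤ) - 1 := by omega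
            omega⟩
          · rw [uderase_cells]; exact Finset.notMem_erase _ _
          · rw [uderase_cells, Finset.insert_erase hbelow]
    · -- ε = -1 : remove b, add it back
      refine ⟨ν, μ, hstep, ?_, hstep⟩
      refine Or.inr ⟨b, hbν, ?_, by omega⟩
      rw [hc, Finset.erase_insert hb]
  · -- the step removes box `b`
    have hstep : UDStepRes μ ν a := Or.inr ⟨b, hb, hc, hr⟩
    have hbν : b ∉ ν.cells := by rw [hc]; exact Finset.notMem_erase _ _
    have hmemν : ∀ x : ℕ × ℕ, x ∈ μ.cells → x ≠ b → x ∈ ν.cells := by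
      intro x hx hne; rw [hc]; exact Finset.mem_erase.2 ⟨hne, hx⟩
    rcases hε with rfl | rfl
    · -- ε = 1 : remove b, add it back, remove it again
      refine ⟨ν, μ, hstep, ?_, hstep⟩
      refine Or.inl ⟨b, hbν, ?_, by omega⟩
      rw [hc, Finset.insert_erase hb]
    · -- ε = -1
      obtain ⟨r, c⟩ := b
      have hbelowν : ∀ y : ℕ × ℕ, ((r, c) : ℕ × ℕ) ≤ y → y ∉ ν.cells := by
        intro y hy hmem
        exact hbν ((YoungDiagram.mem_cells _).2
          (ν.isLowerSet hy ((YoungDiagram.mem_cells _).1 hmem)))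
      by_cases hdown : c = 0 ∨ (r + 1, c - 1) ∈ μ
      · -- add the box (r+1, c), remove it again, then remove b
        have hnotμ : (r + 1, c) ∉ μ.cells := by
          intro hmem
          have hne : ((r + 1, c) : ℕ × ℕ) ≠ (r, c) := by simp
          exact hbelowν (r + 1, c) ⟨by omega, le_refl _⟩ (hmemν _ hmem hne)
        have hadd : UDAddable μ (r + 1, c) := by
          rintro ⟨i, j⟩ ⟨hi, hj⟩ hne
          simp only [ne_eq, Prod.mk.injEq, not_and] at hne
          by_cases hir : i ≤ r
          · exact (YoungDiagram.mem_cells _).1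
              (μ.isLowerSet (⟨hir, hj⟩ : ((i, j) : ℕ × ℕ) ≤ (r, c))
                ((YoungDiagram.mem_cells _).1 hb))
          · have hi' : i = r + 1 := by omega
            have hjc : j < c := by
              rcases Nat.lt_or_ge j c with h' | h'
              · exact h'
              · exact absurd (by omega : j = c) (hne hi')
            rcases hdown with h0 | hm
            · omega
            · have : ((i, j) : ℕ × ℕ) ≤ (r + 1, c - 1) := ⟨by omega, by omega⟩
              exact (YoungDiagram.mem_cells _).1
                (μ.isLowerSet this ((YoungDiagram.mem_cells _).1 hm))
        refine ⟨UDadd μ (r + 1, c) hadd, μ, ?_, ?_, hstep⟩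
        · exact Or.inl ⟨(r + 1, c), hnotμ, rfl, by simp at hr ⊢; omega⟩
        · refine Or.inr ⟨(r + 1, c), Finset.mem_insert_self _ _, ?_, by simp at hr ⊢; omega⟩
          rw [udadd_cells, Finset.erase_insert hnotμ]
      · -- remove b, remove (r, c-1), add it back
        push_neg at hdown
        obtain ⟨hc0, hnm⟩ := hdown
        have hleft : (r, c - 1) ∈ ν.cells := by
          have hμ : (r, c - 1) ∈ μ.cells := (YoungDiagram.mem_cells _).2
            (μ.isLowerSet (⟨le_refl _, by omega⟩ : ((r, c - 1) : ℕ × ℕ) ≤ (r, c))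
              ((YoungDiagram.mem_cells _).1 hb))
          exact hmemν _ hμ (by
            intro h1; have := congrArg Prod.snd h1; simp at this; omega)
        have hrem : UDRemovable ν (r, c - 1) := by
          rintro ⟨i, j⟩ hij ⟨hi, hj⟩
          simp only at hi hj
          have hijν : (i, j) ∈ ν.cells := (YoungDiagram.mem_cells _).2 hij
          have hijμ : (i, j) ∈ μ.cells := by
            rw [hc] at hijν; exact (Finset.mem_erase.1 hijν).2
          have hir : i = r := by
            by_contra hne
            have : ((r + 1, c - 1) : ℕ × ℕ) ≤ (i, j) := ⟨by omega, hj⟩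
            exact hnm (μ.isLowerSet this ((YoungDiagram.mem_cells _).1 hijμ))
          have hjc : j = c - 1 := by
            by_contra hne
            exact hbelowν (i, j) ⟨by omega, by omega⟩ hijν
          simp [hir, hjc]
        refine ⟨ν, UDerase ν (r, c - 1) hrem, hstep, ?_, ?_⟩
        · exact Or.inr ⟨(r, c - 1), hleft, rfl, by
            simp at hr ⊢
            have : ((c - 1 : ℕ) : ℤ) = (c : ℤ) - 1 := by omega
            omega⟩
        · refine Or.inl ⟨(r, c - 1), ?_, ?_, by
            simp at hr ⊢
            have : ((c - 1 : ℕ) : ℤ) = (c : ℤ) - 1 := by omega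
            omega⟩
          · rw [uderase_cells]; exact Finset.notMem_erase _ _
          · rw [uderase_cells, Finset.insert_erase hleft]

lemma isUDTab_append {l₁ : List ℤ} : ∀ {μ ν : YoungDiagram} {l₂ : List ℤ},
    IsUDTab μ (l₁ ++ l₂) ν ↔ ∃ κ, IsUDTab μ l₁ κ ∧ IsUDTab κ l₂ ν := by
  induction l₁ with
  | nil => intro μ ν l₂; simp [IsUDTab]
  | cons r rs ih =>
    intro μ ν l₂
    simp only [List.cons_append, IsUDTab]
    constructor
    · rintro ⟨μ', hs, ht⟩
      obtain ⟨κ, h1, h2⟩ := ih.1 ht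
      exact ⟨κ, ⟨μ', hs, h1⟩, h2⟩
    · rintro ⟨κ, ⟨μ', hs, h1⟩, h2⟩
      exact ⟨μ', hs, ih.2 ⟨κ, h1, h2⟩⟩

end UDAux

/-- If `(…, a, …)` is the target residue sequence of an up-down tableau of shape `lam`,
then so is the sequence obtained by replacing the entry `a` by the three entries
`a, a ± 1, a`. -/
theorem udTableau_insert_triple (l₁ l₂ : List ℤ) (a ε : ℤ) (hε : ε = 1 ∨ ε = -1)
    (lam : YoungDiagram) (h : IsUDTab ⊥ (l₁ ++ a :: l₂) lam) :
    IsUDTab ⊥ (l₁ ++ a :: (a + ε) :: a :: l₂) lam := by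
  rw [isUDTab_append] at h ⊢
  obtain ⟨κ, h1, h2⟩ := h
  obtain ⟨κ', hs, h3⟩ : ∃ κ', UDStepRes κ κ' a ∧ IsUDTab κ' l₂ lam := h2
  obtain ⟨κ₁, κ₂, s1, s2, s3⟩ := udStep_triple hε hs
  exact ⟨κ, h1, κ₁, s1, κ₂, s2, κ', s3, h3⟩
end

section
/- Let (i_1, …, i_k) be the target residue sequence of an up-down tableau of shape ∅ (the empty Young diagram), and suppose that for some index l and some ε ∈ {+1, −1} one has i_{l+1} = i_l + ε and i_{l+2} = i_l. Then the sequence (i_1, …, i_l, i_{l+3}, …, i_k), obtained by deleting the entries at positions l+1 and l+2, is the target residue sequence of an up-down tableau of shape ∅. -/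
namespace UDAux


/-- Uniqueness of an addable cell on a given diagonal. -/
lemma add_unique {μ ν ν' : YoungDiagram} {b b' : ℕ × ℕ}
    (hb : b ∉ μ.cells) (hb' : b' ∉ μ.cells)
    (hν : ν.cells = insert b μ.cells) (hν' : ν'.cells = insert b' μ.cells)
    (hd : (b.2 : ℤ) - b.1 = (b'.2 : ℤ) - b'.1) : b = b' := by
  obtain ⟨r, c⟩ := b
  obtain ⟨r', c'⟩ := b'
  simp only at hd ⊢
  -- a directional helper
  have main : ∀ (μ ν ν' : YoungDiagram) (r c r' c' : ℕ), (r, c) ∉ μ.cells →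
      ν.cells = insert (r, c) μ.cells → ν'.cells = insert (r', c') μ.cells →
      (c : ℤ) - r = (c' : ℤ) - r' → r < r' → False := by
    intro μ ν ν' r c r' c' hb hν hν' hd hrr
    have h1 : (r', c') ∈ ν'.cells := by rw [hν']; exact Finset.mem_insert_self _ _
    have h2 : (r' - 1, c') ∈ ν'.cells := by
      rw [YoungDiagram.mem_cells] at h1 ⊢
      exact ν'.up_left_mem (Nat.sub_le _ _) le_rfl h1
    have h3 : (r' - 1, c') ∈ μ.cells := by
      rw [hν'] at h2
      rcases Finset.mem_insert.1 h2 with h | h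
      · exfalso; have := (Prod.ext_iff.1 h).1; simp at this; omega
      · exact h
    have h4 : (r, c) ∈ μ.cells := by
      rw [YoungDiagram.mem_cells] at h3 ⊢
      exact μ.up_left_mem (by omega) (by omega) h3
    exact hb h4
  rcases lt_trichotomy r r' with h | h | h
  · exact absurd (main μ ν ν' r c r' c' hb hν hν' hd h) not_false
  · subst h
    have hcc : c = c' := by omega
    subst hcc
    rfl
  · exact absurd (main μ ν' ν r' c' r c hb' hν' hν hd.symm h) not_false

/-- Uniqueness of a removable cell on a given diagonal. -/
lemma rem_unique {μ ν ν' : YoungDiagram} {b b' : ℕ × ℕ}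
    (hb : b ∈ μ.cells) (hb' : b' ∈ μ.cells)
    (hν : ν.cells = μ.cells.erase b) (hν' : ν'.cells = μ.cells.erase b')
    (hd : (b.2 : ℤ) - b.1 = (b'.2 : ℤ) - b'.1) : b = b' := by
  obtain ⟨r, c⟩ := b
  obtain ⟨r', c'⟩ := b'
  simp only at hd ⊢
  have main : ∀ (μ ν : YoungDiagram) (r c r' c' : ℕ), (r, c) ∈ μ.cells →
      (r', c') ∈ μ.cells → ν.cells = μ.cells.erase (r, c) →
      (c : ℤ) - r = (c' : ℤ) - r' → r < r' → False := by
    intro μ ν r c r' c' hb hb' hν hd hrr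
    -- (r+1, c) ≤ (r', c') so (r+1, c) ∈ μ; but then (r, c) ∈ ν, contradiction
    have h1 : (r + 1, c) ∈ μ.cells := by
      rw [YoungDiagram.mem_cells] at hb' ⊢
      exact μ.up_left_mem (by omega) (by omega) hb'
    have h2 : (r + 1, c) ∈ ν.cells := by
      rw [hν]; exact Finset.mem_erase.2 ⟨by simp, h1⟩
    have h3 : (r, c) ∈ ν.cells := by
      rw [YoungDiagram.mem_cells] at h2 ⊢
      exact ν.up_left_mem (by omega) le_rfl h2
    rw [hν] at h3
    exact (Finset.mem_erase.1 h3).1 rfl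
  rcases lt_trichotomy r r' with h | h | h
  · exact absurd (main μ ν r c r' c' hb hb' hν hd h) not_false
  · subst h
    have hcc : c = c' := by omega
    subst hcc
    rfl
  · exact absurd (main μ ν' r' c' r c hb' hb hν' hd.symm h) not_false



/-- Number of cells of `μ` on diagonal `d` (i.e. with `col - row = d`). -/
def diagCount (μ : YoungDiagram) (d : ℤ) : ℕ :=
  (μ.cells.filter (fun b => (b.2 : ℤ) - (b.1 : ℤ) = d)).card

lemma diagCount_insert {μ ν : YoungDiagram} {b : ℕ × ℕ}
    (hb : b ∉ μ.cells) (hν : ν.cells = insert b μ.cells) (d : ℤ) :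
    diagCount ν d = diagCount μ d + (if (b.2 : ℤ) - (b.1 : ℤ) = d then 1 else 0) := by
  unfold diagCount
  rw [hν, Finset.filter_insert]
  split
  · rw [Finset.card_insert_of_notMem (fun h => hb (Finset.mem_filter.1 h).1)]
  · rfl

lemma diagCount_erase {μ ν : YoungDiagram} {b : ℕ × ℕ}
    (hb : b ∈ μ.cells) (hν : ν.cells = μ.cells.erase b) (d : ℤ) :
    diagCount μ d = diagCount ν d + (if (b.2 : ℤ) - (b.1 : ℤ) = d then 1 else 0) := by
  have h1 : b ∉ ν.cells := by rw [hν]; exact Finset.notMem_erase _ _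
  have h2 : μ.cells = insert b ν.cells := by rw [hν, Finset.insert_erase hb]
  exact diagCount_insert h1 h2 d

lemma lemA {μ : YoungDiagram} {q : ℤ} (hq : 1 ≤ q) : diagCount μ q ≤ diagCount μ (q - 1) := by
  apply Finset.card_le_card_of_injOn (fun b => (b.1, b.2 - 1))
  · rintro ⟨r, c⟩ hm
    obtain ⟨hmem, hdiag⟩ := Finset.mem_filter.1 hm
    simp only at hdiag
    have hc : 1 ≤ c := by omega
    refine Finset.mem_filter.2 ⟨?_, ?_⟩
    · rw [YoungDiagram.mem_cells] at hmem ⊢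
      exact μ.up_left_mem le_rfl (Nat.sub_le _ _) hmem
    · simp only
      omega
  · rintro ⟨r, c⟩ hm ⟨r', c'⟩ hm' heq
    obtain ⟨_, hdiag⟩ := Finset.mem_filter.1 hm
    obtain ⟨_, hdiag'⟩ := Finset.mem_filter.1 hm'
    simp only at hdiag hdiag'
    simp only [Prod.mk.injEq] at heq ⊢
    omega

lemma lemC {μ : YoungDiagram} {q : ℤ} (hq : q ≤ 0) :
    diagCount μ (q - 1) ≤ diagCount μ q := by
  apply Finset.card_le_card_of_injOn (fun b => (b.1 - 1, b.2))
  · rintro ⟨r, c⟩ hm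
    obtain ⟨hmem, hdiag⟩ := Finset.mem_filter.1 hm
    simp only at hdiag
    have hr : 1 ≤ r := by omega
    refine Finset.mem_filter.2 ⟨?_, ?_⟩
    · rw [YoungDiagram.mem_cells] at hmem ⊢
      exact μ.up_left_mem (by omega) le_rfl hmem
    · simp only
      omega
  · rintro ⟨r, c⟩ hm ⟨r', c'⟩ hm' heq
    obtain ⟨_, hdiag⟩ := Finset.mem_filter.1 hm
    obtain ⟨_, hdiag'⟩ := Finset.mem_filter.1 hm'
    simp only at hdiag hdiag'
    simp only [Prod.mk.injEq] at heq ⊢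
    omega

lemma lemB {μ : YoungDiagram} {q : ℤ} (hq : 1 ≤ q) :
    diagCount μ (q - 1) ≤ diagCount μ q + 1 := by
  have key : diagCount μ (q-1) ≤
      (insert ((0 : ℕ), (0 : ℕ)) (μ.cells.filter (fun b => (b.2 : ℤ) - (b.1 : ℤ) = q))).card := by
    apply Finset.card_le_card_of_injOn (fun b => if b.1 = 0 then (0, 0) else (b.1 - 1, b.2))
    · rintro ⟨r, c⟩ hm
      obtain ⟨hmem, hdiag⟩ := Finset.mem_filter.1 hm
      simp only at hdiag
      dsimp only
      by_cases h0 : r = 0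
      · rw [if_pos h0]; exact Finset.mem_insert_self _ _
      · rw [if_neg h0]
        apply Finset.mem_insert_of_mem
        refine Finset.mem_filter.2 ⟨?_, ?_⟩
        · rw [YoungDiagram.mem_cells] at hmem ⊢
          exact μ.up_left_mem (Nat.sub_le _ _) le_rfl hmem
        · simp only
          omega
    · rintro ⟨r, c⟩ hm ⟨r', c'⟩ hm' heq
      obtain ⟨_, hdiag⟩ := Finset.mem_filter.1 hm
      obtain ⟨_, hdiag'⟩ := Finset.mem_filter.1 hm'
      simp only at hdiag hdiag'
      dsimp only at heq
      split_ifs at heq with h0 h0'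
      all_goals simp only [Prod.mk.injEq] at heq ⊢
      all_goals omega
  exact key.trans (Finset.card_insert_le _ _)

lemma lemD {μ : YoungDiagram} {q : ℤ} (hq : q ≤ 0) :
    diagCount μ q ≤ diagCount μ (q - 1) + 1 := by
  have key : diagCount μ q ≤
      (insert ((0 : ℕ), (0 : ℕ)) (μ.cells.filter (fun b => (b.2 : ℤ) - (b.1 : ℤ) = q - 1))).card := by
    apply Finset.card_le_card_of_injOn (fun b => if b.2 = 0 then (0, 0) else (b.1, b.2 - 1))
    · rintro ⟨r, c⟩ hm
      obtain ⟨hmem, hdiag⟩ := Finset.mem_filter.1 hm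
      simp only at hdiag
      dsimp only
      by_cases h0 : c = 0
      · rw [if_pos h0]; exact Finset.mem_insert_self _ _
      · rw [if_neg h0]
        apply Finset.mem_insert_of_mem
        refine Finset.mem_filter.2 ⟨?_, ?_⟩
        · rw [YoungDiagram.mem_cells] at hmem ⊢
          exact μ.up_left_mem le_rfl (Nat.sub_le _ _) hmem
        · simp only
          omega
    · rintro ⟨r, c⟩ hm ⟨r', c'⟩ hm' heq
      obtain ⟨_, hdiag⟩ := Finset.mem_filter.1 hm
      obtain ⟨_, hdiag'⟩ := Finset.mem_filter.1 hm'
      simp only at hdiag hdiag'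
      dsimp only at heq
      split_ifs at heq with h0 h0'
      all_goals simp only [Prod.mk.injEq] at heq ⊢
      all_goals omega
  exact key.trans (Finset.card_insert_le _ _)

/-- Any two Young diagrams have "diagonal gaps" at `q` differing by at most 1. -/
lemma gap_bound (μ ν : YoungDiagram) (q : ℤ) :
    (diagCount μ (q - 1) : ℤ) - diagCount μ q ≤ (diagCount ν (q - 1) : ℤ) - diagCount ν q + 1 := by
  rcases le_or_gt 1 q with h | h
  · have h1 := lemB (μ := μ) h
    have h2 := lemA (μ := ν) h
    omega
  · have h1 := lemC (μ := μ) (q := q) (by omega)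
    have h2 := lemD (μ := ν) (q := q) (by omega)
    omega

lemma diagCount_erase' {μ ν : YoungDiagram} {b : ℕ × ℕ}
    (hb : b ∈ μ.cells) (hν : ν.cells = μ.cells.erase b) (d : ℤ) :
    diagCount μ d = diagCount ν d + (if (b.2 : ℤ) - (b.1 : ℤ) = d then 1 else 0) := by
  have h1 : b ∉ ν.cells := by rw [hν]; exact Finset.notMem_erase _ _
  have h2 : μ.cells = insert b ν.cells := by rw [hν, Finset.insert_erase hb]
  exact diagCount_insert h1 h2 d

lemma diagCount_add_eq {μ ν : YoungDiagram} {b : ℕ × ℕ} {x : ℤ}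
    (hb : b ∉ μ.cells) (hν : ν.cells = insert b μ.cells) (hx : x = (b.2 : ℤ) - b.1)
    (d : ℤ) (hd : x = d) : (diagCount ν d : ℤ) = diagCount μ d + 1 := by
  have h := diagCount_insert hb hν d
  rw [if_pos (by omega)] at h
  omega

lemma diagCount_add_ne {μ ν : YoungDiagram} {b : ℕ × ℕ} {x : ℤ}
    (hb : b ∉ μ.cells) (hν : ν.cells = insert b μ.cells) (hx : x = (b.2 : ℤ) - b.1)
    (d : ℤ) (hd : x ≠ d) : (diagCount ν d : ℤ) = diagCount μ d := by
  have h := diagCount_insert hb hν d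
  rw [if_neg (by omega)] at h
  omega

lemma diagCount_rem_eq {μ ν : YoungDiagram} {b : ℕ × ℕ} {x : ℤ}
    (hb : b ∈ μ.cells) (hν : ν.cells = μ.cells.erase b) (hx : x = (b.2 : ℤ) - b.1 - 1)
    (d : ℤ) (hd : x = d - 1) : (diagCount ν d : ℤ) = diagCount μ d - 1 := by
  have h := diagCount_erase' hb hν d
  rw [if_pos (by omega)] at h
  omega

lemma diagCount_rem_ne {μ ν : YoungDiagram} {b : ℕ × ℕ} {x : ℤ}
    (hb : b ∈ μ.cells) (hν : ν.cells = μ.cells.erase b) (hx : x = (b.2 : ℤ) - b.1 - 1)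
    (d : ℤ) (hd : x ≠ d - 1) : (diagCount ν d : ℤ) = diagCount μ d := by
  have h := diagCount_erase' hb hν d
  rw [if_neg (by omega)] at h
  omega

lemma gap_bound' (μ ν : YoungDiagram) (p q : ℤ) (hpq : q = p + 1) :
    (diagCount μ p : ℤ) - diagCount μ q ≤ (diagCount ν p : ℤ) - diagCount ν q + 1 := by
  subst hpq
  have h := gap_bound μ ν (p + 1)
  rw [add_sub_cancel_right] at h
  exact h

lemma key {μ0 μ1 μ2 μ3 : YoungDiagram} {a ε : ℤ} (hε : ε = 1 ∨ ε = -1)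
    (h1 : UDStepRes μ0 μ1 a) (h2 : UDStepRes μ1 μ2 (a + ε)) (h3 : UDStepRes μ2 μ3 a) :
    UDStepRes μ0 μ3 a := by
  rcases hε with rfl | rfl
  · -- ε = 1
    rcases h1 with ⟨b1, hb1, hc1, hr1⟩ | ⟨b1, hb1, hc1, hr1⟩ <;>
      rcases h2 with ⟨b2, hb2, hc2, hr2⟩ | ⟨b2, hb2, hc2, hr2⟩ <;>
      rcases h3 with ⟨b3, hb3, hc3, hr3⟩ | ⟨b3, hb3, hc3, hr3⟩
    · -- (A, A, A): impossible, q = a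
      exfalso
      have e1a := diagCount_add_ne hb1 hc1 hr1 (a - 1) (by omega)
      have e1b := diagCount_add_eq hb1 hc1 hr1 a (by omega)
      have e2a := diagCount_add_ne hb2 hc2 hr2 (a - 1) (by omega)
      have e2b := diagCount_add_ne hb2 hc2 hr2 a (by omega)
      have e3a := diagCount_add_ne hb3 hc3 hr3 (a - 1) (by omega)
      have e3b := diagCount_add_eq hb3 hc3 hr3 a (by omega)
      have g1 := gap_bound' μ0 μ3 (a - 1) a (by ring)
      have g2 := gap_bound' μ3 μ0 (a - 1) a (by ring)
      omega
    · -- (A, A, R): possible, b2 = b3, result = step1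
      have hm2 : b2 ∈ μ2.cells := by rw [hc2]; exact Finset.mem_insert_self _ _
      have he2 : μ1.cells = μ2.cells.erase b2 := by rw [hc2, Finset.erase_insert hb2]
      have h23 : b2 = b3 := rem_unique hm2 hb3 he2 hc3 (by omega)
      left
      refine ⟨b1, hb1, ?_, hr1⟩
      rw [hc3, ← h23, hc2, Finset.erase_insert hb2, hc1]
    · -- (A, R, A): impossible, q = a
      exfalso
      have e1a := diagCount_add_ne hb1 hc1 hr1 (a - 1) (by omega)
      have e1b := diagCount_add_eq hb1 hc1 hr1 a (by omega)
      have e2a := diagCount_rem_ne hb2 hc2 hr2 (a - 1) (by omega)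
      have e2b := diagCount_rem_ne hb2 hc2 hr2 a (by omega)
      have e3a := diagCount_add_ne hb3 hc3 hr3 (a - 1) (by omega)
      have e3b := diagCount_add_eq hb3 hc3 hr3 a (by omega)
      have g1 := gap_bound' μ0 μ3 (a - 1) a (by ring)
      have g2 := gap_bound' μ3 μ0 (a - 1) a (by ring)
      omega
    · -- (A, R, R): impossible, q = a + 1
      exfalso
      have e1a := diagCount_add_eq hb1 hc1 hr1 a (by omega)
      have e1b := diagCount_add_ne hb1 hc1 hr1 (a + 1) (by omega)
      have e2a := diagCount_rem_ne hb2 hc2 hr2 a (by omega)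
      have e2b := diagCount_rem_ne hb2 hc2 hr2 (a + 1) (by omega)
      have e3a := diagCount_rem_ne hb3 hc3 hr3 a (by omega)
      have e3b := diagCount_rem_eq hb3 hc3 hr3 (a + 1) (by omega)
      have g1 := gap_bound' μ0 μ3 a (a + 1) (by ring)
      have g2 := gap_bound' μ3 μ0 a (a + 1) (by ring)
      omega
    · -- (R, A, A): possible, b1 = b2, μ2 = μ0, result = step3
      have hm1 : b1 ∉ μ1.cells := by rw [hc1]; exact Finset.notMem_erase _ _
      have hi1 : μ0.cells = insert b1 μ1.cells := by rw [hc1, Finset.insert_erase hb1]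
      have h12 : b1 = b2 := add_unique hm1 hb2 hi1 hc2 (by omega)
      have hμ2 : μ2.cells = μ0.cells := by rw [hc2, ← h12, hc1, Finset.insert_erase hb1]
      rw [hμ2] at hb3 hc3
      exact Or.inl ⟨b3, hb3, hc3, hr3⟩
    · -- (R, A, R): possible, b1 = b2, μ2 = μ0, result = step3
      have hm1 : b1 ∉ μ1.cells := by rw [hc1]; exact Finset.notMem_erase _ _
      have hi1 : μ0.cells = insert b1 μ1.cells := by rw [hc1, Finset.insert_erase hb1]
      have h12 : b1 = b2 := add_unique hm1 hb2 hi1 hc2 (by omega)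
      have hμ2 : μ2.cells = μ0.cells := by rw [hc2, ← h12, hc1, Finset.insert_erase hb1]
      rw [hμ2] at hb3 hc3
      exact Or.inr ⟨b3, hb3, hc3, hr3⟩
    · -- (R, R, A): impossible, q = a + 1
      exfalso
      have e1a := diagCount_rem_ne hb1 hc1 hr1 a (by omega)
      have e1b := diagCount_rem_eq hb1 hc1 hr1 (a + 1) (by omega)
      have e2a := diagCount_rem_ne hb2 hc2 hr2 a (by omega)
      have e2b := diagCount_rem_ne hb2 hc2 hr2 (a + 1) (by omega)
      have e3a := diagCount_add_eq hb3 hc3 hr3 a (by omega)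
      have e3b := diagCount_add_ne hb3 hc3 hr3 (a + 1) (by omega)
      have g1 := gap_bound' μ0 μ3 a (a + 1) (by ring)
      have g2 := gap_bound' μ3 μ0 a (a + 1) (by ring)
      omega
    · -- (R, R, R): impossible, q = a + 1
      exfalso
      have e1a := diagCount_rem_ne hb1 hc1 hr1 a (by omega)
      have e1b := diagCount_rem_eq hb1 hc1 hr1 (a + 1) (by omega)
      have e2a := diagCount_rem_ne hb2 hc2 hr2 a (by omega)
      have e2b := diagCount_rem_ne hb2 hc2 hr2 (a + 1) (by omega)
      have e3a := diagCount_rem_ne hb3 hc3 hr3 a (by omega)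
      have e3b := diagCount_rem_eq hb3 hc3 hr3 (a + 1) (by omega)
      have g1 := gap_bound' μ0 μ3 a (a + 1) (by ring)
      have g2 := gap_bound' μ3 μ0 a (a + 1) (by ring)
      omega
  · -- ε = -1
    rcases h1 with ⟨b1, hb1, hc1, hr1⟩ | ⟨b1, hb1, hc1, hr1⟩ <;>
      rcases h2 with ⟨b2, hb2, hc2, hr2⟩ | ⟨b2, hb2, hc2, hr2⟩ <;>
      rcases h3 with ⟨b3, hb3, hc3, hr3⟩ | ⟨b3, hb3, hc3, hr3⟩
    · -- (A, A, A): impossible, q = a + 1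
      exfalso
      have e1a := diagCount_add_eq hb1 hc1 hr1 a (by omega)
      have e1b := diagCount_add_ne hb1 hc1 hr1 (a + 1) (by omega)
      have e2a := diagCount_add_ne hb2 hc2 hr2 a (by omega)
      have e2b := diagCount_add_ne hb2 hc2 hr2 (a + 1) (by omega)
      have e3a := diagCount_add_eq hb3 hc3 hr3 a (by omega)
      have e3b := diagCount_add_ne hb3 hc3 hr3 (a + 1) (by omega)
      have g1 := gap_bound' μ0 μ3 a (a + 1) (by ring)
      have g2 := gap_bound' μ3 μ0 a (a + 1) (by ring)
      omega
    · -- (A, A, R): impossible, q = a + 1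
      exfalso
      have e1a := diagCount_add_eq hb1 hc1 hr1 a (by omega)
      have e1b := diagCount_add_ne hb1 hc1 hr1 (a + 1) (by omega)
      have e2a := diagCount_add_ne hb2 hc2 hr2 a (by omega)
      have e2b := diagCount_add_ne hb2 hc2 hr2 (a + 1) (by omega)
      have e3a := diagCount_rem_ne hb3 hc3 hr3 a (by omega)
      have e3b := diagCount_rem_eq hb3 hc3 hr3 (a + 1) (by omega)
      have g1 := gap_bound' μ0 μ3 a (a + 1) (by ring)
      have g2 := gap_bound' μ3 μ0 a (a + 1) (by ring)
      omega
    · -- (A, R, A): possible, b1 = b2, μ2 = μ0, result = step3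
      have hm1 : b1 ∈ μ1.cells := by rw [hc1]; exact Finset.mem_insert_self _ _
      have he1 : μ0.cells = μ1.cells.erase b1 := by rw [hc1, Finset.erase_insert hb1]
      have h12 : b1 = b2 := rem_unique hm1 hb2 he1 hc2 (by omega)
      have hμ2 : μ2.cells = μ0.cells := by rw [hc2, ← h12, hc1, Finset.erase_insert hb1]
      rw [hμ2] at hb3 hc3
      exact Or.inl ⟨b3, hb3, hc3, hr3⟩
    · -- (A, R, R): possible, b1 = b2, μ2 = μ0, result = step3
      have hm1 : b1 ∈ μ1.cells := by rw [hc1]; exact Finset.mem_insert_self _ _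
      have he1 : μ0.cells = μ1.cells.erase b1 := by rw [hc1, Finset.erase_insert hb1]
      have h12 : b1 = b2 := rem_unique hm1 hb2 he1 hc2 (by omega)
      have hμ2 : μ2.cells = μ0.cells := by rw [hc2, ← h12, hc1, Finset.erase_insert hb1]
      rw [hμ2] at hb3 hc3
      exact Or.inr ⟨b3, hb3, hc3, hr3⟩
    · -- (R, A, A): impossible, q = a + 1
      exfalso
      have e1a := diagCount_rem_ne hb1 hc1 hr1 a (by omega)
      have e1b := diagCount_rem_eq hb1 hc1 hr1 (a + 1) (by omega)
      have e2a := diagCount_add_ne hb2 hc2 hr2 a (by omega)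
      have e2b := diagCount_add_ne hb2 hc2 hr2 (a + 1) (by omega)
      have e3a := diagCount_add_eq hb3 hc3 hr3 a (by omega)
      have e3b := diagCount_add_ne hb3 hc3 hr3 (a + 1) (by omega)
      have g1 := gap_bound' μ0 μ3 a (a + 1) (by ring)
      have g2 := gap_bound' μ3 μ0 a (a + 1) (by ring)
      omega
    · -- (R, A, R): impossible, q = a + 1
      exfalso
      have e1a := diagCount_rem_ne hb1 hc1 hr1 a (by omega)
      have e1b := diagCount_rem_eq hb1 hc1 hr1 (a + 1) (by omega)
      have e2a := diagCount_add_ne hb2 hc2 hr2 a (by omega)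
      have e2b := diagCount_add_ne hb2 hc2 hr2 (a + 1) (by omega)
      have e3a := diagCount_rem_ne hb3 hc3 hr3 a (by omega)
      have e3b := diagCount_rem_eq hb3 hc3 hr3 (a + 1) (by omega)
      have g1 := gap_bound' μ0 μ3 a (a + 1) (by ring)
      have g2 := gap_bound' μ3 μ0 a (a + 1) (by ring)
      omega
    · -- (R, R, A): possible, b2 = b3, μ3 = μ1, result = step1
      have hm2 : b2 ∉ μ2.cells := by rw [hc2]; exact Finset.notMem_erase _ _
      have hi2 : μ1.cells = insert b2 μ2.cells := by rw [hc2, Finset.insert_erase hb2]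
      have h23 : b2 = b3 := add_unique hm2 hb3 hi2 hc3 (by omega)
      right
      refine ⟨b1, hb1, ?_, hr1⟩
      rw [hc3, ← h23, hc2, Finset.insert_erase hb2, hc1]
    · -- (R, R, R): impossible, q = a + 2
      exfalso
      have e1a := diagCount_rem_eq hb1 hc1 hr1 (a + 1) (by omega)
      have e1b := diagCount_rem_ne hb1 hc1 hr1 (a + 2) (by omega)
      have e2a := diagCount_rem_ne hb2 hc2 hr2 (a + 1) (by omega)
      have e2b := diagCount_rem_ne hb2 hc2 hr2 (a + 2) (by omega)
      have e3a := diagCount_rem_eq hb3 hc3 hr3 (a + 1) (by omega)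
      have e3b := diagCount_rem_ne hb3 hc3 hr3 (a + 2) (by omega)
      have g1 := gap_bound' μ0 μ3 (a + 1) (a + 2) (by ring)
      have g2 := gap_bound' μ3 μ0 (a + 1) (a + 2) (by ring)
      omega
  

lemma isUDTab_append {l₁ l₂ : List ℤ} :
    ∀ {μ ν : YoungDiagram}, IsUDTab μ (l₁ ++ l₂) ν ↔ ∃ ξ, IsUDTab μ l₁ ξ ∧ IsUDTab ξ l₂ ν := by
  induction l₁ with
  | nil =>
    intro μ ν
    simp [IsUDTab]
  | cons r rs ih =>
    intro μ ν
    constructor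
    · rintro ⟨μ', hstep, htail⟩
      obtain ⟨ξ, hx1, hx2⟩ := ih.1 htail
      exact ⟨ξ, ⟨μ', hstep, hx1⟩, hx2⟩
    · rintro ⟨ξ, ⟨μ', hstep, hx1⟩, hx2⟩
      exact ⟨μ', hstep, ih.2 ⟨ξ, hx1, hx2⟩⟩

end UDAux

/-- If `(…, a, a ± 1, a, …)` is the target residue sequence of an up-down tableau of
shape `∅`, then the sequence obtained by deleting the two entries `a ± 1, a` is again
the target residue sequence of an up-down tableau of shape `∅`. -/
theorem udTableau_delete_triple (l₁ l₂ : List ℤ) (a ε : ℤ) (hε : ε = 1 ∨ ε = -1)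
    (h : IsUDTab ⊥ (l₁ ++ a :: (a + ε) :: a :: l₂) ⊥) :
    IsUDTab ⊥ (l₁ ++ a :: l₂) ⊥ := by
  rw [UDAux.isUDTab_append] at h ⊢
  obtain ⟨ξ, hpre, hmid⟩ := h
  obtain ⟨μ1, s1, μ2, s2, μ3, s3, htail⟩ := hmid
  exact ⟨ξ, hpre, μ3, UDAux.key hε s1 s2 s3, htail⟩
end

section
/- For every cap diagram μ̄ with exactly n caps, there are only finitely many cup diagrams λ̲ with exactly n cups such that the circle diagram λ̲μ̄ contains no circle and no non-propagating line. -/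
/-- `x` is covered by (i.e. is an endpoint of) an arc of the diagram `D`. -/
def ArcDiagram.Cov (D : ArcDiagram) (x : ℚ) : Prop := ∃ c ∈ D.arcs, x = c.1 ∨ x = c.2

/-- Adjacency in the circle diagram with bottom cup diagram `lam` and top cap diagram `mu`:
`x` and `y` are joined by a cup of `lam` or a cap of `mu`. -/
def CircAdj (lam mu : ArcDiagram) (x y : ℚ) : Prop :=
  (x, y) ∈ lam.arcs ∨ (y, x) ∈ lam.arcs ∨ (x, y) ∈ mu.arcs ∨ (y, x) ∈ mu.arcs

/-- `x` and `y` lie in the same connected component of the circle diagram `lam mu`. -/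
def CircConn (lam mu : ArcDiagram) : ℚ → ℚ → Prop := Relation.ReflTransGen (CircAdj lam mu)

/-- The circle diagram `lam mu` contains a circle, i.e. a connected component all of whose
vertices lie on both a cup and a cap (every vertex has degree two, so the component is a
closed cycle). -/
def HasCircle (lam mu : ArcDiagram) : Prop :=
  ∃ x : ℚ, ∀ y : ℚ, CircConn lam mu x y → lam.Cov y ∧ mu.Cov y

lemma ArcDiagram.arcs_injective : Function.Injective ArcDiagram.arcs := by
  rintro ⟨a, _, _, _, _, _⟩ ⟨b, _, _, _, _, _⟩ h
  dsimp at h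
  subst h
  rfl

/-- width bound: a cup of width `w` has `w-1` half-integers strictly inside,
each an endpoint of one of the other `card - 1` arcs. -/
lemma width_bound (D : ArcDiagram) {c : ℚ × ℚ} (hc : c ∈ D.arcs) :
    c.2 ≤ c.1 + (2 * D.arcs.card - 1 : ℤ) := by
  classical
  obtain ⟨k, hk⟩ := D.half_left c hc
  obtain ⟨m, hm⟩ := D.half_right c hc
  have hlt := D.lt c hc
  have hd : c.2 = c.1 + ((m - k : ℤ) : ℚ) := by rw [hk, hm]; push_cast; ring
  set d : ℤ := m - k with hdd
  have hd1 : 1 ≤ d := by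
    have h0 : (0:ℚ) < (d:ℚ) := by rw [hd] at hlt; linarith
    have : (0:ℤ) < d := by exact_mod_cast h0
    omega
  -- endpoints set of the other arcs
  set E : Finset ℚ := (D.arcs.erase c).image Prod.fst ∪ (D.arcs.erase c).image Prod.snd with hEdef
  have hinj : ∀ i ∈ Finset.Ioo (0:ℤ) d, c.1 + (i:ℚ) ∈ E := by
    intro i hi
    rw [Finset.mem_Ioo] at hi
    have hx1 : c.1 < c.1 + (i:ℚ) := by
      have : (0:ℚ) < (i:ℚ) := by exact_mod_cast hi.1
      linarith
    have hx2 : c.1 + (i:ℚ) < c.2 := by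
      have : (i:ℚ) < (d:ℚ) := by exact_mod_cast hi.2
      rw [hd]; linarith
    have hhalf : IsHalfInt (c.1 + (i:ℚ)) := ⟨k + i, by rw [hk]; push_cast; ring⟩
    obtain ⟨c', hc', hxc', _, _⟩ := D.nested c hc _ hhalf hx1 hx2
    have hne : c' ≠ c := by
      rintro rfl
      rcases hxc' with h | h
      · exact absurd h (ne_of_gt hx1)
      · exact absurd h (ne_of_lt hx2)
    have hmem : c' ∈ D.arcs.erase c := Finset.mem_erase.mpr ⟨hne, hc'⟩
    rcases hxc' with h | h
    · exact Finset.mem_union_left _ (Finset.mem_image.mpr ⟨c', hmem, h.symm⟩)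
    · exact Finset.mem_union_right _ (Finset.mem_image.mpr ⟨c', hmem, h.symm⟩)
  have hcard : (Finset.Ioo (0:ℤ) d).card ≤ E.card := by
    refine Finset.card_le_card_of_injOn (fun i : ℤ => c.1 + (i:ℚ)) hinj ?_
    intro a _ b _ hab
    simp only at hab
    have : (a:ℚ) = (b:ℚ) := by linarith [add_left_cancel hab]
    exact_mod_cast this
  have hEcard : E.card ≤ 2 * (D.arcs.card - 1) := by
    calc E.card ≤ ((D.arcs.erase c).image Prod.fst).card
        + ((D.arcs.erase c).image Prod.snd).card := Finset.card_union_le _ _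
      _ ≤ (D.arcs.erase c).card + (D.arcs.erase c).card :=
          Nat.add_le_add (Finset.card_image_le) (Finset.card_image_le)
      _ = 2 * (D.arcs.card - 1) := by rw [Finset.card_erase_of_mem hc]; ring
  have hIoo : (Finset.Ioo (0:ℤ) d).card = (d - 1).toNat := by
    rw [Int.card_Ioo]; ring_nf
  have hN : 1 ≤ D.arcs.card := Finset.card_pos.mpr ⟨c, hc⟩
  have hdle : d ≤ 2 * (D.arcs.card : ℤ) - 1 := by
    rw [hIoo] at hcard
    have := hcard.trans hEcard
    omega
  rw [hd]
  have : (d:ℚ) ≤ ((2 * (D.arcs.card:ℤ) - 1 : ℤ) : ℚ) := by exact_mod_cast hdle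
  push_cast at this ⊢
  linarith

/-- For every cap diagram `mu` with exactly `n` caps there are only finitely many cup
diagrams `lam` with exactly `n` cups such that the circle diagram `lam mu` contains no
circle and no non-propagating line (a non-propagating line being a component with two
distinct ends which are both bottom rays, i.e. not covered by a cup, or both top rays,
i.e. not covered by a cap). -/
theorem finitely_many_cup_diagrams (mu : ArcDiagram) (n : ℕ) (hn : mu.arcs.card = n) :
    {lam : ArcDiagram | lam.arcs.card = n ∧ ¬ HasCircle lam mu ∧
      ¬ ∃ x y : ℚ, x ≠ y ∧ CircConn lam mu x y ∧
          ((¬ lam.Cov x ∧ ¬ lam.Cov y) ∨ (¬ mu.Cov x ∧ ¬ mu.Cov y))}.Finite := by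
  classical
  set E : Finset ℚ := mu.arcs.image Prod.fst ∪ mu.arcs.image Prod.snd with hE
  set S : Finset ℚ :=
    (E ×ˢ Finset.Icc (-(2*(n:ℤ))) (2*(n:ℤ))).image (fun p => p.1 + (p.2 : ℚ)) with hS
  have hmemS : ∀ e ∈ E, ∀ i : ℤ, -(2*(n:ℤ)) ≤ i → i ≤ 2*(n:ℤ) → e + (i:ℚ) ∈ S := by
    intro e he i h1 h2
    exact Finset.mem_image.mpr ⟨(e, i),
      Finset.mem_product.mpr ⟨he, Finset.mem_Icc.mpr ⟨h1, h2⟩⟩, rfl⟩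
  apply Set.Finite.of_finite_image (f := fun lam => lam.arcs)
  · apply Set.Finite.subset (Finset.finite_toSet ((S ×ˢ S).powerset))
    rintro _ ⟨lam, ⟨hcard, _, hline⟩, rfl⟩
    simp only [Finset.coe_powerset, Set.mem_preimage, Set.mem_powerset_iff,
      Finset.coe_subset, Finset.mem_coe]
    intro c hc
    -- at least one endpoint of c is covered by mu
    have hcov : mu.Cov c.1 ∨ mu.Cov c.2 := by
      by_contra hcon
      push_neg at hcon
      exact hline ⟨c.1, c.2, ne_of_lt (lam.lt c hc),
        Relation.ReflTransGen.single (Or.inl (by simpa using hc)),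
        Or.inr ⟨hcon.1, hcon.2⟩⟩
    -- the integer width of c
    obtain ⟨k, hk⟩ := lam.half_left c hc
    obtain ⟨m, hm⟩ := lam.half_right c hc
    have hd : c.2 = c.1 + ((m - k : ℤ) : ℚ) := by rw [hk, hm]; push_cast; ring
    set d : ℤ := m - k with hdd
    have hd1 : 1 ≤ d := by
      have hlt := lam.lt c hc
      have h0 : (0:ℚ) < (d:ℚ) := by rw [hd] at hlt; linarith
      have : (0:ℤ) < d := by exact_mod_cast h0
      omega
    have hd2 : d ≤ 2*(n:ℤ) := by
      have := width_bound lam hc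
      rw [hcard] at this
      rw [hd] at this
      have : (d:ℚ) ≤ ((2*(n:ℤ) - 1 : ℤ) : ℚ) := by push_cast at this ⊢; linarith
      have : d ≤ 2*(n:ℤ) - 1 := by exact_mod_cast this
      omega
    have hn0 : (0:ℤ) ≤ 2*(n:ℤ) := by positivity
    have hcovE : ∀ x : ℚ, mu.Cov x → x ∈ E := by
      rintro x ⟨c', hc', h | h⟩
      · exact Finset.mem_union_left _ (Finset.mem_image.mpr ⟨c', hc', h.symm⟩)
      · exact Finset.mem_union_right _ (Finset.mem_image.mpr ⟨c', hc', h.symm⟩)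
    rw [Finset.mem_product]
    rcases hcov with h | h
    · have h1 : c.1 ∈ E := hcovE _ h
      constructor
      · have := hmemS c.1 h1 0 (by omega) (by omega); simpa using this
      · have := hmemS c.1 h1 d (by omega) hd2
        rw [hd]; exact this
    · have h2 : c.2 ∈ E := hcovE _ h
      constructor
      · have := hmemS c.2 h2 (-d) (by omega) (by omega)
        have hc1 : c.1 = c.2 + ((-d : ℤ) : ℚ) := by rw [hd]; push_cast; ring
        rw [hc1]; exact this
      · have := hmemS c.2 h2 0 (by omega) (by omega); simpa using this
  · exact fun a _ b _ h => ArcDiagram.arcs_injective h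
end

section
/- Let ∅=μ_0, μ_1, …, μ_n be an up-down tableau with target residue sequence (i_1, …, i_n), and suppose |i_k − i_{k+1}| > 1 for some 1 ≤ k < n. Then the box added or removed at step k+1 can already be added to, respectively removed from, μ_{k−1}; performing step k+1's operation on μ_{k−1} and then step k's operation yields an up-down tableau ν_0, …, ν_n with ν_j = μ_j for all j ≠ k, of the same shape μ_n, whose target residue sequence is (i_1, …, i_{k−1}, i_{k+1}, i_k, i_{k+2}, …, i_n). -/
/-!
Write a step as the symmetric difference `μ ∆ {b}`; its residue is the content of `b`, lowered
by one for a removal. Toggling `a` and then `c` ends where toggling `c` and then `a` does, so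
it suffices to see that `a ≠ c` and that `μ ∆ {c}` is again a Young diagram. If `a = c`, the
two residues differ by exactly one. If `a < c`, the three lower sets force both steps to be
additions with `c` covering `a`, so the contents, hence the residues, differ by one; `c < a` is
the same situation for the tableau read backwards. Hence `a` and `c` are incomparable, and then
toggling `c` in `μ` meets the same lower-set condition as toggling it in `μ ∆ {a}`.
-/

/-- One step of an up-down tableau with explicit box and target residue: `ν` is obtained
from `μ` by adding the box `b` (target residue `col b - row b`) or by removing the box
`b` (target residue `col b - row b - 1`), the residue being `r`. -/
def UDStepBoxRes (μ ν : YoungDiagram) (b : ℕ × ℕ) (r : ℤ) : Prop :=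
  (b ∉ μ.cells ∧ ν.cells = insert b μ.cells ∧ r = (b.2 : ℤ) - (b.1 : ℤ)) ∨
  (b ∈ μ.cells ∧ ν.cells = μ.cells.erase b ∧ r = (b.2 : ℤ) - (b.1 : ℤ) - 1)

open scoped symmDiff

section Toggle

variable {α : Type*} [PartialOrder α] {s : Set α} {a c : α}

theorem IsLowerSet.symmDiff_singleton_of_incomparable (hs : IsLowerSet s)
    (hu : IsLowerSet (s ∆ {a} ∆ {c})) (hac : ¬a ≤ c) (hca : ¬c ≤ a) :
    IsLowerSet (s ∆ {c}) := by
  have hne : a ≠ c := fun h => hac h.le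
  intro y x hxy hy
  by_cases hya : y = a
  · subst hya
    have hx : x ≠ c := by rintro rfl; exact hca hxy
    have : y ∈ s := by simpa [Set.mem_symmDiff, hne] using hy
    simp [Set.mem_symmDiff, hx, hs hxy this]
  by_cases hxa : x = a
  · subst hxa
    have hy' : y ≠ c := by rintro rfl; exact hac hxy
    have : y ∈ s := by simpa [Set.mem_symmDiff, hy'] using hy
    simp [Set.mem_symmDiff, hne, hs hxy this]
  · have := hu hxy (by simpa [Set.mem_symmDiff, hya] using hy)
    simpa [Set.mem_symmDiff, hxa] using this

theorem IsLowerSet.covBy_of_symmDiff_singleton (hs : IsLowerSet s)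
    (ht : IsLowerSet (s ∆ {a})) (hu : IsLowerSet (s ∆ {a} ∆ {c})) (hac : a < c) :
    a ∉ s ∧ c ∉ s ∆ {a} ∧ a ⋖ c := by
  have ha : a ∉ s := by
    intro has
    by_cases hct : c ∈ s ∆ {a}
    · have := ht hac.le hct
      simp [Set.mem_symmDiff, has] at this
    · have := hu hac.le (by simp [Set.mem_symmDiff, hct])
      simp [Set.mem_symmDiff, has, hac.ne] at this
  have hc : c ∉ s ∆ {a} := by
    intro hct
    have hcs : c ∈ s := by simpa [Set.mem_symmDiff, hac.ne'] using hct
    exact ha (hs hac.le hcs)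
  refine ⟨ha, hc, hac, fun z haz hzc => ha (hs haz.le ?_)⟩
  have := hu hzc.le (by simp [Set.mem_symmDiff, hc])
  simpa [Set.mem_symmDiff, hzc.ne, haz.ne'] using this

end Toggle

def cellContent (x : ℕ × ℕ) : ℤ := x.2 - x.1

theorem abs_cellContent_sub_of_covBy {x y : ℕ × ℕ} (h : x ⋖ y) :
    |cellContent x - cellContent y| = 1 := by
  rcases Prod.covBy_iff.mp h with ⟨h₁, h₂⟩ | ⟨h₁, h₂⟩ <;>
    rw [Nat.covBy_iff_add_one_eq] at h₁ <;>
    simp only [cellContent, ← h₁, h₂] <;> push_cast <;> norm_num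

theorem udStepBoxRes_iff {μ ν : YoungDiagram} {b : ℕ × ℕ} {r : ℤ} :
    UDStepBoxRes μ ν b r ↔
      ν.cells = μ.cells ∆ {b} ∧ r = cellContent b - if b ∈ μ.cells then 1 else 0 := by
  by_cases hb : b ∈ μ.cells
  · have : μ.cells ∆ {b} = μ.cells.erase b := by
      ext x; by_cases x = b <;> simp_all [Finset.mem_symmDiff]
    simp [UDStepBoxRes, hb, this, cellContent]
  · have : μ.cells ∆ {b} = insert b μ.cells := by
      ext x; by_cases x = b <;> simp_all [Finset.mem_symmDiff]
    simp [UDStepBoxRes, hb, this, cellContent]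

theorem UDStepBoxRes.swap {μ ν ρ : YoungDiagram} {a c : ℕ × ℕ} {r r' : ℤ}
    (h₁ : UDStepBoxRes μ ν a r) (h₂ : UDStepBoxRes ν ρ c r') (hr : 1 < |r - r'|) :
    ∃ ν', UDStepBoxRes μ ν' c r' ∧ UDStepBoxRes ν' ρ a r := by
  rw [udStepBoxRes_iff] at h₁ h₂
  obtain ⟨hν, rfl⟩ := h₁
  obtain ⟨hρ, rfl⟩ := h₂
  have hs := μ.isLowerSet
  have ht := ν.isLowerSet
  have hu := ρ.isLowerSet
  rw [hν] at ht hρ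
  rw [hρ] at hu
  push_cast at ht hu
  have hne : a ≠ c := by
    rintro rfl
    by_cases ha : a ∈ μ.cells <;> simp [hν, Finset.mem_symmDiff, ha] at hr
  have hac : ¬a ≤ c := by
    intro hle
    obtain ⟨ha, hc, hcov⟩ := hs.covBy_of_symmDiff_singleton ht hu (hle.lt_of_ne hne)
    rw [← Finset.coe_singleton, ← Finset.coe_symmDiff, ← hν, Finset.mem_coe] at hc
    simp [Finset.mem_coe.not.mp ha, hc, abs_cellContent_sub_of_covBy hcov] at hr
  have hca : ¬c ≤ a := by
    intro hle
    -- read backwards, the two steps toggle `c` and then `a`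
    obtain ⟨hc, ha, hcov⟩ := hu.covBy_of_symmDiff_singleton (by simpa) (by simpa)
      (hle.lt_of_ne hne.symm)
    simp only [symmDiff_symmDiff_cancel_right, Set.mem_symmDiff, Set.mem_singleton_iff,
      Finset.mem_coe, YoungDiagram.mem_cells] at hc ha
    have hcν : c ∈ ν.cells := by simp [hν, Finset.mem_symmDiff]; tauto
    have haμ : a ∈ μ := by tauto
    rw [abs_sub_comm] at hr
    simp [hcν, haμ, abs_cellContent_sub_of_covBy hcov] at hr
  refine ⟨⟨μ.cells ∆ {c}, ?_⟩, udStepBoxRes_iff.mpr ⟨rfl, ?_⟩, udStepBoxRes_iff.mpr ⟨?_, ?_⟩⟩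
  · push_cast
    exact hs.symmDiff_singleton_of_incomparable hu hac hca
  · simp [hν, Finset.mem_symmDiff, hne.symm]
  · rw [hρ, symmDiff_right_comm]
  · simp [Finset.mem_symmDiff, hne]

/-- Let `T 0 = ∅, T 1, …, T n` be an up-down tableau whose step `j` (from `T (j-1)` to
`T j`) adds or removes the box `b j` and has target residue `i j`, and suppose
`|i k - i (k+1)| > 1` for some `1 ≤ k < n`.  Then the box of step `k+1` can already be
added to, respectively removed from, `T (k-1)`; performing step `k+1`'s operation on
`T (k-1)` and then step `k`'s operation yields an up-down tableau `ν` with `ν j = T j`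
for all `j ≠ k` (in particular of the same shape `T n`) whose target residue sequence is
obtained from that of `T` by swapping the entries at positions `k` and `k+1`. -/
theorem udTableau_swap_distant_steps (n k : ℕ) (T : ℕ → YoungDiagram)
    (b : ℕ → ℕ × ℕ) (i : ℕ → ℤ)
    (h0 : T 0 = ⊥)
    (hstep : ∀ j, 1 ≤ j → j ≤ n → UDStepBoxRes (T (j - 1)) (T j) (b j) (i j))
    (hk1 : 1 ≤ k) (hk2 : k + 1 ≤ n)
    (hdist : 1 < |i k - i (k + 1)|) :
    ∃ ν : ℕ → YoungDiagram,
      ν 0 = ⊥ ∧ (∀ j, j ≠ k → ν j = T j) ∧ ν n = T n ∧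
      UDStepBoxRes (ν (k - 1)) (ν k) (b (k + 1)) (i (k + 1)) ∧
      UDStepBoxRes (ν k) (ν (k + 1)) (b k) (i k) ∧
      (∀ j, 1 ≤ j → j ≤ n → j ≠ k → j ≠ k + 1 →
        UDStepBoxRes (ν (j - 1)) (ν j) (b j) (i j)) := by
  obtain ⟨ν', h₁, h₂⟩ := (hstep k hk1 (by omega)).swap
    (by simpa using hstep (k + 1) (by omega) hk2) hdist
  have hT : ∀ j, j ≠ k → Function.update T k ν' j = T j := fun j hj =>
    Function.update_of_ne hj _ _
  refine ⟨Function.update T k ν', (hT 0 (by omega)).trans h0, hT, hT n (by omega), ?_, ?_, ?_⟩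
  · rwa [hT (k - 1) (by omega), Function.update_self]
  · rwa [hT (k + 1) (by omega), Function.update_self]
  · intro j hj1 hjn hjk hjk1
    rw [hT j hjk, hT (j - 1) (by omega)]
    exact hstep j hj1 hjn
end
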